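/- arXiv:math/0210143 — 4 statements merged into one kernel-verified Lean document; each statement's English description precedes it below -/
import Mathlib

section
/- For every nonzero μ ∈ N_s and every real number s < 0 there exists g ∈ Sp(n,ℝ) such that ‖g.μ‖² = −4s (equivalently, tr(Ric_{g.μ}) = s). In geometric terms: a non-abelian symplectic nilpotent Lie group admits, for each s < 0, a compatible left-invariant metric of scalar curvature s. -/
open scoped BigOperators
open Matrix

noncomputable section

/-- vectors in `ℝ^m`. -/
abbrev Vec (m : ℕ) := Fin m → ℝ

/-- bilinear-map candidates `ℝ^m × ℝ^m → ℝ^m`. -/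
abbrev Bil (m : ℕ) := Vec m → Vec m → Vec m

/-- the `i`-th standard basis vector of `ℝ^m`. -/
def bvec (m : ℕ) (i : Fin m) : Vec m := Pi.single i 1

/-- `μ` is a skew-symmetric bilinear map, i.e. an element of `V = Λ²(ℝ^m)* ⊗ ℝ^m`. -/
def IsSkewBil {m : ℕ} (μ : Bil m) : Prop :=
  (∀ Y, IsLinearMap ℝ fun X => μ X Y) ∧ (∀ X, IsLinearMap ℝ (μ X)) ∧ ∀ X Y, μ X Y = -μ Y X

/-- the Jacobi identity for `μ`. -/
def IsJacobi {m : ℕ} (μ : Bil m) : Prop :=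
  ∀ X Y Z, μ (μ X Y) Z + μ (μ Y Z) X + μ (μ Z X) Y = 0

/-- iterated left multiplications `μ(X (k-1), ⋯ μ(X 0, Y))`. -/
def adPow {m : ℕ} (μ : Bil m) (X : ℕ → Vec m) : ℕ → Vec m → Vec m
  | 0, Y => Y
  | k + 1, Y => μ (X k) (adPow μ X k Y)

/-- nilpotency of the bracket `μ`. -/
def IsNilpotentBil {m : ℕ} (μ : Bil m) : Prop :=
  ∃ k : ℕ, ∀ (X : ℕ → Vec m) (Y : Vec m), adPow μ X k Y = 0

/-- membership in the variety `N` of nilpotent Lie brackets on `ℝ^m`. -/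
def NilBracket {m : ℕ} (μ : Bil m) : Prop :=
  IsSkewBil μ ∧ IsJacobi μ ∧ IsNilpotentBil μ

/-- the `GL_m(ℝ)` action `(g.μ)(X,Y) = g μ(g⁻¹X, g⁻¹Y)` on `V`. -/
def mact {m : ℕ} (g : Matrix (Fin m) (Fin m) ℝ) (μ : Bil m) : Bil m :=
  fun X Y => g.mulVec (μ (g⁻¹.mulVec X) (g⁻¹.mulVec Y))

/-- `‖μ‖²` for the natural inner product on `V`. -/
def normSqV {m : ℕ} (μ : Bil m) : ℝ :=
  ∑ i, ∑ j, ∑ k, (μ (bvec m i) (bvec m j) k) ^ 2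

/-- the Ricci operator of `(N_μ, ⟨·,·⟩)`, as a matrix:
`⟨Ric_μ X, Y⟩ = -(1/2) Σ ⟨μ(X,Xᵢ),Xⱼ⟩⟨μ(Y,Xᵢ),Xⱼ⟩ + (1/4) Σ ⟨μ(Xᵢ,Xⱼ),X⟩⟨μ(Xᵢ,Xⱼ),Y⟩`. -/
def RicM {m : ℕ} (μ : Bil m) : Matrix (Fin m) (Fin m) ℝ :=
  Matrix.of fun x y =>
    -(1/2) * (∑ i, ∑ j, μ (bvec m x) (bvec m i) j * μ (bvec m y) (bvec m i) j)
    + (1/4) * (∑ i, ∑ j, μ (bvec m i) (bvec m j) x * μ (bvec m i) (bvec m j) y)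

/-- `D` is a derivation of the bracket `μ`. -/
def IsDerivation {m : ℕ} (μ : Bil m) (D : Matrix (Fin m) (Fin m) ℝ) : Prop :=
  ∀ X Y, D.mulVec (μ X Y) = μ (D.mulVec X) Y + μ X (D.mulVec Y)

/-- the matrix of `ad_μ X : Y ↦ μ(X,Y)`. -/
def adMat {m : ℕ} (μ : Bil m) (X : Vec m) : Matrix (Fin m) (Fin m) ℝ :=
  Matrix.of fun j i => μ X (bvec m i) j

/-- the moment-map value `M_μ = -4 Σᵢ (ad_μ Xᵢ)ᵗ(ad_μ Xᵢ) + 2 Σᵢ (ad_μ Xᵢ)(ad_μ Xᵢ)ᵗ`. -/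
def Mmat {m : ℕ} (μ : Bil m) : Matrix (Fin m) (Fin m) ℝ :=
  (-4 : ℝ) • (∑ i, (adMat μ (bvec m i))ᵀ * adMat μ (bvec m i))
    + (2 : ℝ) • (∑ i, adMat μ (bvec m i) * (adMat μ (bvec m i))ᵀ)

/-- the 2-form `ω(X,Y) = ⟨X, JY⟩`. -/
def sympForm {m : ℕ} (J : Matrix (Fin m) (Fin m) ℝ) (X Y : Vec m) : ℝ :=
  X ⬝ᵥ J.mulVec Y

/-- closedness of a 2-form `ω` with respect to the bracket `μ`:
`ω(μ(X,Y),Z) + ω(μ(Y,Z),X) + ω(μ(Z,X),Y) = 0`. -/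
def IsClosedForm {m : ℕ} (ω : Vec m → Vec m → ℝ) (μ : Bil m) : Prop :=
  ∀ X Y Z, ω (μ X Y) Z + ω (μ Y Z) X + ω (μ Z X) Y = 0

/-- membership in `Sp(n,ℝ)`: invertible and preserving `ω = ⟨·, J·⟩`. -/
def IsSymplMat {m : ℕ} (J g : Matrix (Fin m) (Fin m) ℝ) : Prop :=
  IsUnit g ∧ ∀ X Y, sympForm J (g.mulVec X) (g.mulVec Y) = sympForm J X Y

/-- membership in `GL(n,ℂ) = {g : gJ = Jg}`. -/
def IsCxMat {m : ℕ} (J g : Matrix (Fin m) (Fin m) ℝ) : Prop :=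
  IsUnit g ∧ g * J = J * g

/-- the anti-complexified Ricci operator `Ric^{ac} = (1/2)(Ric + J Ric J)`. -/
def Ricac {m : ℕ} (J : Matrix (Fin m) (Fin m) ℝ) (μ : Bil m) : Matrix (Fin m) (Fin m) ℝ :=
  (1/2 : ℝ) • (RicM μ + J * RicM μ * J)

/-- the complexified Ricci operator `Ric^{c} = (1/2)(Ric − J Ric J)`. -/
def Ricc {m : ℕ} (J : Matrix (Fin m) (Fin m) ℝ) (μ : Bil m) : Matrix (Fin m) (Fin m) ℝ :=
  (1/2 : ℝ) • (RicM μ - J * RicM μ * J)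

section Toolkit
variable {m : ℕ}

lemma dot_bvec (v : Vec m) (j : Fin m) : v ⬝ᵥ bvec m j = v j := by
  simp [bvec, dotProduct_single]

lemma bvec_dot (v : Vec m) (j : Fin m) : bvec m j ⬝ᵥ v = v j := by
  simp [bvec, single_dotProduct]

lemma bsumV {M : Type*} [AddCommMonoid M] [Module ℝ M] (L : Vec m → M)
    (hadd : ∀ a b, L (a + b) = L a + L b) (hsmul : ∀ (c : ℝ) a, L (c • a) = c • L a)
    (v : Vec m) : ∑ j, v j • L (bvec m j) = L v := by
  let L' : Vec m →ₗ[ℝ] M := ⟨⟨L, fun a b => hadd a b⟩, fun c a => hsmul c a⟩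
  have : ∀ x, L x = L' x := fun _ => rfl
  rw [this]
  have hv : v = ∑ j, v j • bvec m j := by
    ext i
    simp [bvec, Finset.sum_apply, Pi.single_apply]
  conv_rhs => rw [hv]
  rw [map_sum]
  simp [this]

lemma bsumR (L : Vec m → ℝ) (hadd : ∀ a b, L (a + b) = L a + L b)
    (hsmul : ∀ (c : ℝ) a, L (c • a) = c • L a) (v : Vec m) :
    ∑ j, v j * L (bvec m j) = L v := bsumV L hadd hsmul v

end Toolkit
section Toolkit2
variable {m : ℕ}

/-- inner product on V. -/
def innerV (μ lam : Bil m) : ℝ :=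
  ∑ i, ∑ j, (μ (bvec m i) (bvec m j)) ⬝ᵥ (lam (bvec m i) (bvec m j))

lemma normSqV_eq_innerV (μ : Bil m) : normSqV μ = innerV μ μ := by
  unfold normSqV innerV dotProduct
  congr 1; ext i; congr 1; ext j; congr 1; ext k; ring

lemma normSqV_nonneg (μ : Bil m) : 0 ≤ normSqV μ :=
  Finset.sum_nonneg fun _ _ => Finset.sum_nonneg fun _ _ => Finset.sum_nonneg fun _ _ => sq_nonneg _

lemma normSqV_zero : normSqV (0 : Bil m) = 0 := by simp [normSqV]

lemma normSqV_coeff_eq_zero {μ : Bil m} (h : normSqV μ = 0) :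
    ∀ i j, μ (bvec m i) (bvec m j) = 0 := by
  intro i j
  ext k
  have h1 : ∀ i ∈ (Finset.univ : Finset (Fin m)),
      (0:ℝ) ≤ ∑ j, ∑ k, (μ (bvec m i) (bvec m j) k) ^ 2 :=
    fun _ _ => Finset.sum_nonneg fun _ _ => Finset.sum_nonneg fun _ _ => sq_nonneg _
  have h2 := (Finset.sum_eq_zero_iff_of_nonneg h1).1 h i (Finset.mem_univ i)
  have h3 := (Finset.sum_eq_zero_iff_of_nonneg
    (fun _ _ => Finset.sum_nonneg fun _ _ => sq_nonneg _)).1 h2 j (Finset.mem_univ j)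
  have h4 := (Finset.sum_eq_zero_iff_of_nonneg (fun _ _ => sq_nonneg _)).1 h3 k (Finset.mem_univ k)
  exact pow_eq_zero_iff (two_ne_zero) |>.1 h4

/-- a bilinear map vanishing on basis vectors vanishes. -/
lemma bil_eq_zero {μ : Bil m} (h1 : ∀ Y, IsLinearMap ℝ fun X => μ X Y)
    (h2 : ∀ X, IsLinearMap ℝ (μ X)) (h : ∀ i j, μ (bvec m i) (bvec m j) = 0) : μ = 0 := by
  funext X Y
  have e1 : μ X Y = ∑ i, X i • μ (bvec m i) Y :=
    (bsumV (fun Z => μ Z Y) (fun a b => (h1 Y).map_add a b) (fun c a => (h1 Y).map_smul c a) X).symm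
  rw [e1]
  have e2 : ∀ i, μ (bvec m i) Y = ∑ j, Y j • μ (bvec m i) (bvec m j) := fun i =>
    (bsumV (fun Z => μ (bvec m i) Z) (fun a b => (h2 _).map_add a b)
      (fun c a => (h2 _).map_smul c a) Y).symm
  simp only [e2, h, smul_zero, Finset.sum_const_zero]
  rfl

lemma normSqV_comb (x y z : Bil m) (hxy : innerV x y = 0) (hxz : innerV x z = 0)
    (hyz : innerV y z = 0) (a b : ℝ) :
    normSqV (fun X Y => x X Y + a • y X Y + b • z X Y)
      = normSqV x + a ^ 2 * normSqV y + b ^ 2 * normSqV z := by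
  unfold normSqV innerV dotProduct at *
  have expand : ∀ i j k, ((x (bvec m i) (bvec m j) + a • y (bvec m i) (bvec m j)
        + b • z (bvec m i) (bvec m j)) k) ^ 2
      = (x (bvec m i) (bvec m j) k)^2 + a^2 * (y (bvec m i) (bvec m j) k)^2
        + b^2 * (z (bvec m i) (bvec m j) k)^2
        + (2*a) * (x (bvec m i) (bvec m j) k * y (bvec m i) (bvec m j) k)
        + (2*b) * (x (bvec m i) (bvec m j) k * z (bvec m i) (bvec m j) k)
        + (2*a*b) * (y (bvec m i) (bvec m j) k * z (bvec m i) (bvec m j) k) := by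
    intro i j k; simp only [Pi.add_apply, Pi.smul_apply, smul_eq_mul]; ring
  simp only [expand, Finset.sum_add_distrib, ← Finset.mul_sum]
  rw [hxy, hxz, hyz]
  ring

end Toolkit2
section Toolkit3
variable {m : ℕ}

lemma mact_one (μ : Bil m) : mact 1 μ = μ := by
  funext X Y
  have : (1 : Matrix (Fin m) (Fin m) ℝ)⁻¹ = 1 := Matrix.inv_eq_right_inv (by simp)
  simp [mact, this, Matrix.one_mulVec]

lemma mact_mul (g h : Matrix (Fin m) (Fin m) ℝ) (μ : Bil m) :
    mact (g * h) μ = mact g (mact h μ) := by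
  funext X Y
  simp [mact, Matrix.mul_inv_rev, ← Matrix.mulVec_mulVec]

lemma mact_comb (g : Matrix (Fin m) (Fin m) ℝ) (x y z : Bil m) (a b : ℝ) :
    mact g (fun X Y => x X Y + a • y X Y + b • z X Y)
      = fun X Y => mact g x X Y + a • mact g y X Y + b • mact g z X Y := by
  funext X Y
  simp [mact, Matrix.mulVec_add, Matrix.mulVec_smul]

lemma trace_RicM (μ : Bil m) : Matrix.trace (RicM μ) = -(1/4) * normSqV μ := by
  unfold Matrix.trace RicM normSqV Matrix.diag
  simp only [Matrix.of_apply]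
  rw [Finset.sum_add_distrib, ← Finset.mul_sum, ← Finset.mul_sum]
  have h1 : ∑ x, ∑ i, ∑ j, μ (bvec m x) (bvec m i) j * μ (bvec m x) (bvec m i) j
      = ∑ i, ∑ j, ∑ k, (μ (bvec m i) (bvec m j) k) ^ 2 := by
    congr 1; ext x; congr 1; ext i; congr 1; ext j; ring
  have h2 : ∑ x, ∑ i, ∑ j, μ (bvec m i) (bvec m j) x * μ (bvec m i) (bvec m j) x
      = ∑ i, ∑ j, ∑ k, (μ (bvec m i) (bvec m j) k) ^ 2 := by
    rw [Finset.sum_comm]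
    congr 1; ext i
    rw [Finset.sum_comm]
    congr 1; ext j; congr 1; ext x; ring
  rw [h1, h2]; ring

lemma isSymplMat_one (J : Matrix (Fin m) (Fin m) ℝ) : IsSymplMat J 1 := by
  constructor
  · exact isUnit_one
  · intro X Y; simp [Matrix.one_mulVec]

lemma IsSymplMat.mul {J g h : Matrix (Fin m) (Fin m) ℝ} (hg : IsSymplMat J g)
    (hh : IsSymplMat J h) : IsSymplMat J (g * h) := by
  refine ⟨hg.1.mul hh.1, fun X Y => ?_⟩
  rw [← Matrix.mulVec_mulVec, ← Matrix.mulVec_mulVec, hg.2, hh.2]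

/-- reachability: `g` is connected to the identity by a continuous path of symplectic
matrices with continuously varying inverses. -/
def Reach (J : Matrix (Fin m) (Fin m) ℝ) (g : Matrix (Fin m) (Fin m) ℝ) : Prop :=
  ∃ γ γi : ℝ → Matrix (Fin m) (Fin m) ℝ, Continuous γ ∧ Continuous γi ∧ γ 0 = 1 ∧ γ 1 = g
    ∧ (∀ x, γ x * γi x = 1) ∧ ∀ x, IsSymplMat J (γ x)

lemma reach_one (J : Matrix (Fin m) (Fin m) ℝ) : Reach J (1 : Matrix (Fin m) (Fin m) ℝ) :=
  ⟨fun _ => 1, fun _ => 1, continuous_const, continuous_const, rfl, rfl,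
    fun _ => by simp, fun _ => isSymplMat_one J⟩

lemma Reach.mul {J g h : Matrix (Fin m) (Fin m) ℝ} (hg : Reach J g) (hh : Reach J h) :
    Reach J (g * h) := by
  obtain ⟨γ, γi, hc, hci, h0, h1, hinv, hsp⟩ := hg
  obtain ⟨δ, δi, hc', hci', h0', h1', hinv', hsp'⟩ := hh
  refine ⟨fun x => γ x * δ x, fun x => δi x * γi x, hc.matrix_mul hc', hci'.matrix_mul hci,
    by simp [h0, h0'], by simp [h1, h1'], fun x => ?_, fun x => (hsp x).mul (hsp' x)⟩
  rw [mul_assoc, ← mul_assoc (δ x), hinv', one_mul, hinv]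

end Toolkit3
section Toolkit4
variable {m : ℕ}

lemma bil_expand {μ : Bil m} (hμ : IsSkewBil μ) (a b : Vec m) (p : Fin m) :
    μ a b p = ∑ r, ∑ s, a r * b s * μ (bvec m r) (bvec m s) p := by
  have e1 : μ a b = ∑ r, a r • μ (bvec m r) b :=
    (bsumV (fun z => μ z b) (fun u v => (hμ.1 b).map_add u v)
      (fun c u => (hμ.1 b).map_smul c u) a).symm
  have e2 : ∀ r, μ (bvec m r) b = ∑ s, b s • μ (bvec m r) (bvec m s) := fun r =>
    (bsumV (fun z => μ (bvec m r) z) (fun u v => (hμ.2.1 _).map_add u v)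
      (fun c u => (hμ.2.1 _).map_smul c u) b).symm
  rw [e1]
  simp only [e2, Finset.smul_sum, Finset.sum_apply, Pi.smul_apply, smul_eq_mul]
  congr 1; ext r; congr 1; ext s; ring

lemma cont_normSq {μ : Bil m} (hμ : IsSkewBil μ) (γ γi : ℝ → Matrix (Fin m) (Fin m) ℝ)
    (hc : Continuous γ) (hci : Continuous γi) (hinv : ∀ x, γ x * γi x = 1) :
    Continuous fun x => normSqV (mact (γ x) μ) := by
  have key : ∀ x, normSqV (mact (γ x) μ) = ∑ i, ∑ j, ∑ k,
      (∑ p, γ x k p * (∑ r, ∑ s, γi x r i * γi x s j * μ (bvec m r) (bvec m s) p)) ^ 2 := by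
    intro x
    have hgi : (γ x)⁻¹ = γi x := Matrix.inv_eq_right_inv (hinv x)
    unfold normSqV mact
    rw [hgi]
    congr 1; ext i; congr 1; ext j; congr 1; ext k
    congr 1
    rw [Matrix.mulVec, dotProduct]
    congr 1; ext p
    congr 1
    rw [bil_expand hμ]
    congr 1; ext r; congr 1; ext s
    have h1 : ((γi x).mulVec (bvec m i)) r = γi x r i := by
      simp [bvec, Matrix.mulVec_single]
    have h2 : ((γi x).mulVec (bvec m j)) s = γi x s j := by
      simp [bvec, Matrix.mulVec_single]
    rw [h1, h2]
  simp only [key]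
  apply continuous_finset_sum; intro i _
  apply continuous_finset_sum; intro j _
  apply continuous_finset_sum; intro k _
  apply Continuous.pow
  apply continuous_finset_sum; intro p _
  apply Continuous.mul
  · exact (continuous_apply p).comp ((continuous_apply k).comp hc)
  · apply continuous_finset_sum; intro r _
    apply continuous_finset_sum; intro s _
    apply Continuous.mul
    · exact Continuous.mul ((continuous_apply i).comp ((continuous_apply r).comp hci))
        ((continuous_apply j).comp ((continuous_apply s).comp hci))
    · exact continuous_const

lemma exists_exact {J : Matrix (Fin m) (Fin m) ℝ} {μ : Bil m} (hμ : IsSkewBil μ)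
    {g₁ g₂ : Matrix (Fin m) (Fin m) ℝ} (hg₁ : Reach J g₁) (hg₂ : Reach J g₂) (r : ℝ)
    (hr₁ : normSqV (mact g₁ μ) ≤ r) (hr₂ : r ≤ normSqV (mact g₂ μ)) :
    ∃ g, IsSymplMat J g ∧ normSqV (mact g μ) = r := by
  obtain ⟨γ, γi, hc, hci, h0, h1, hinv, hsp⟩ := hg₁
  obtain ⟨δ, δi, hc', hci', h0', h1', hinv', hsp'⟩ := hg₂
  set e : ℝ → Matrix (Fin m) (Fin m) ℝ := fun x => δ x * γ (1 - x) with he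
  set ei : ℝ → Matrix (Fin m) (Fin m) ℝ := fun x => γi (1 - x) * δi x with hei
  have hce : Continuous e := hc'.matrix_mul (hc.comp (continuous_const.sub continuous_id))
  have hcei : Continuous ei := (hci.comp (continuous_const.sub continuous_id)).matrix_mul hci'
  have hinve : ∀ x, e x * ei x = 1 := by
    intro x
    show δ x * γ (1 - x) * (γi (1 - x) * δi x) = 1
    rw [mul_assoc, ← mul_assoc (γ (1-x)), hinv, one_mul, hinv']
  have hF : Continuous fun x => normSqV (mact (e x) μ) := cont_normSq hμ e ei hce hcei hinve
  have hF0 : normSqV (mact (e 0) μ) = normSqV (mact g₁ μ) := by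
    show normSqV (mact (δ 0 * γ (1 - 0)) μ) = _
    norm_num [h0', h1]
  have hF1 : normSqV (mact (e 1) μ) = normSqV (mact g₂ μ) := by
    show normSqV (mact (δ 1 * γ (1 - 1)) μ) = _
    norm_num [h0, h1']
  have := intermediate_value_Icc (by norm_num : (0:ℝ) ≤ 1) hF.continuousOn
  have hrmem : r ∈ Set.Icc (normSqV (mact (e 0) μ)) (normSqV (mact (e 1) μ)) := by
    rw [hF0, hF1]; exact ⟨hr₁, hr₂⟩
  obtain ⟨x, _, hx⟩ := this hrmem
  exact ⟨e x, (hsp' x).mul (hsp (1 - x)), hx⟩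

end Toolkit4
section Toolkit5
variable {m : ℕ}

/-- `μ` is supported on the range of the projection `P`. -/
def Supported (P : Matrix (Fin m) (Fin m) ℝ) (μ : Bil m) : Prop :=
  ∀ X Y, μ X Y = P.mulVec (μ (P.mulVec X) (P.mulVec Y))

lemma Supported.value {P : Matrix (Fin m) (Fin m) ℝ} {μ : Bil m} (hPP : P * P = P)
    (hsup : Supported P μ) (X Y : Vec m) : P.mulVec (μ X Y) = μ X Y := by
  conv_lhs => rw [hsup X Y]
  rw [Matrix.mulVec_mulVec, hPP, ← hsup X Y]

lemma Supported.argl {P : Matrix (Fin m) (Fin m) ℝ} {μ : Bil m} (hPP : P * P = P)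
    (hsup : Supported P μ) (X Y : Vec m) : μ (P.mulVec X) Y = μ X Y := by
  rw [hsup (P.mulVec X) Y, Matrix.mulVec_mulVec, hPP, ← hsup X Y]

lemma Supported.argr {P : Matrix (Fin m) (Fin m) ℝ} {μ : Bil m} (hPP : P * P = P)
    (hsup : Supported P μ) (X Y : Vec m) : μ X (P.mulVec Y) = μ X Y := by
  rw [hsup X (P.mulVec Y), Matrix.mulVec_mulVec, hPP, ← hsup X Y]

lemma adPow_congr {μ : Bil m} {X X' : ℕ → Vec m} (k : ℕ) (h : ∀ i < k, X i = X' i)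
    (Y : Vec m) : adPow μ X k Y = adPow μ X' k Y := by
  induction k with
  | zero => rfl
  | succ j ih =>
    show μ (X j) (adPow μ X j Y) = μ (X' j) (adPow μ X' j Y)
    rw [h j (Nat.lt_succ_self j), ih (fun i hi => h i (Nat.lt_succ_of_lt hi))]

lemma exists_central {P : Matrix (Fin m) (Fin m) ℝ} {μ : Bil m} (hμ : NilBracket μ)
    (hμ0 : μ ≠ 0) (hPP : P * P = P) (hsup : Supported P μ) :
    ∃ u : Vec m, u ⬝ᵥ u = 1 ∧ P.mulVec u = u ∧ (∀ X, μ u X = 0) ∧ (∀ X, μ X u = 0) := by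
  obtain ⟨hlin1, hlin2, hskew⟩ := hμ.1
  have hzeror : ∀ X, μ X 0 = 0 := fun X => (hlin2 X).map_zero
  have hS : ∃ k, ∀ (X : ℕ → Vec m) (Y : Vec m), adPow μ X k Y = 0 := hμ.2.2
  classical
  set K := Nat.find hS with hK
  have hKspec : ∀ (X : ℕ → Vec m) (Y : Vec m), adPow μ X K Y = 0 := Nat.find_spec hS
  have hK2 : 2 ≤ K := by
    by_contra hlt
    push_neg at hlt
    interval_cases K
    · exact hμ0 (funext fun X => funext fun Y => by
        have h0 : ∀ Z : Vec m, Z = 0 := fun Z => hKspec (fun _ => 0) Z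
        exact h0 (μ X Y))
    · exact hμ0 (funext fun X => funext fun Y => hKspec (fun _ => X) Y)
  have hKm1 : ¬ ∀ (X : ℕ → Vec m) (Y : Vec m), adPow μ X (K - 1) Y = 0 :=
    Nat.find_min hS (Nat.sub_lt (by omega) one_pos)
  push_neg at hKm1
  obtain ⟨Xs, Ys, hZ0⟩ := hKm1
  set Z := adPow μ Xs (K - 1) Ys with hZdef
  have hcent : ∀ W, μ W Z = 0 := by
    intro W
    set X' : ℕ → Vec m := Function.update Xs (K - 1) W with hX'
    have hupd : adPow μ X' K Ys = 0 := hKspec X' Ys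
    have hKsucc : K = (K - 1) + 1 := by omega
    have e : adPow μ X' K Ys = μ (X' (K-1)) (adPow μ X' (K-1) Ys) := by
      conv_lhs => rw [hKsucc]
      rfl
    have e2 : X' (K-1) = W := Function.update_self _ _ _
    have e3 : adPow μ X' (K-1) Ys = Z := by
      rw [hZdef]
      exact adPow_congr (K-1) (fun i hi => by
        rw [hX', Function.update_of_ne (by omega : i ≠ K - 1)]) Ys
    rw [e, e2, e3] at hupd
    exact hupd
  have hPZ : P.mulVec Z = Z := by
    have hKsucc : K - 1 = (K - 2) + 1 := by omega
    have : Z = μ (Xs (K-2)) (adPow μ Xs (K-2) Ys) := by rw [hZdef, hKsucc]; rfl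
    rw [this]
    exact hsup.value hPP _ _
  -- normalize
  have hZne : Z ≠ 0 := hZ0
  obtain ⟨i, hi⟩ := Function.ne_iff.1 hZne
  have hc : 0 < Z ⬝ᵥ Z := by
    calc (0:ℝ) < Z i * Z i := mul_self_pos.mpr hi
      _ ≤ ∑ j, Z j * Z j := Finset.single_le_sum (fun j _ => mul_self_nonneg (Z j))
          (Finset.mem_univ i)
  set a : ℝ := (Real.sqrt (Z ⬝ᵥ Z))⁻¹ with ha
  refine ⟨a • Z, ?_, ?_, ?_, ?_⟩
  · rw [smul_dotProduct, dotProduct_smul, smul_eq_mul, smul_eq_mul, ha]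
    rw [← mul_assoc, ← mul_inv, Real.mul_self_sqrt hc.le, inv_mul_cancel₀ hc.ne']
  · rw [Matrix.mulVec_smul, hPZ]
  · intro X
    have : μ Z X = 0 := by rw [hskew Z X, hcent X, neg_zero]
    rw [show (a • Z) = a • Z from rfl, (hlin1 X).map_smul, this, smul_zero]
  · intro X
    rw [(hlin2 X).map_smul, hcent X, smul_zero]

end Toolkit5
section Toolkit6
variable {m : ℕ}

lemma vecMulVec_mulVec (a b x : Vec m) :
    (Matrix.vecMulVec a b).mulVec x = (b ⬝ᵥ x) • a := by
  ext i
  simp [Matrix.mulVec, Matrix.vecMulVec_apply, dotProduct, Finset.mul_sum,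
    Finset.sum_mul, mul_comm, mul_assoc, mul_left_comm]

lemma vecMulVec_mul (a b : Vec m) (C : Matrix (Fin m) (Fin m) ℝ) :
    Matrix.vecMulVec a b * C = Matrix.vecMulVec a (Matrix.vecMul b C) := by
  ext i j
  simp [Matrix.mul_apply, Matrix.vecMulVec_apply, Matrix.vecMul, dotProduct,
    Finset.mul_sum, mul_assoc]

lemma mul_vecMulVec (C : Matrix (Fin m) (Fin m) ℝ) (a b : Vec m) :
    C * Matrix.vecMulVec a b = Matrix.vecMulVec (C.mulVec a) b := by
  ext i j
  simp [Matrix.mul_apply, Matrix.vecMulVec_apply, Matrix.mulVec, dotProduct,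
    Finset.sum_mul, mul_assoc]

lemma vecMulVec_mul_vecMulVec (a b c d : Vec m) :
    Matrix.vecMulVec a b * Matrix.vecMulVec c d = (b ⬝ᵥ c) • Matrix.vecMulVec a d := by
  ext i j
  simp only [Matrix.mul_apply, Matrix.vecMulVec_apply, Matrix.smul_apply, smul_eq_mul,
    dotProduct, Finset.sum_mul]
  exact Finset.sum_congr rfl fun p _ => by ring

lemma vecMulVec_transpose (a b : Vec m) :
    (Matrix.vecMulVec a b)ᵀ = Matrix.vecMulVec b a := by
  ext i j
  simp [Matrix.vecMulVec_apply, mul_comm]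

lemma dot_mulVec_left (A : Matrix (Fin m) (Fin m) ℝ) (x y : Vec m) :
    (A.mulVec x) ⬝ᵥ y = x ⬝ᵥ (Aᵀ.mulVec y) := by
  rw [Matrix.dotProduct_mulVec x, Matrix.vecMul_transpose]

lemma trace_vecMulVec (a b : Vec m) : Matrix.trace (Matrix.vecMulVec a b) = a ⬝ᵥ b := by
  simp [Matrix.trace, Matrix.diag, Matrix.vecMulVec_apply, dotProduct]

lemma trace_nonneg_proj {P : Matrix (Fin m) (Fin m) ℝ} (hPt : Pᵀ = P) (hPP : P * P = P) :
    0 ≤ Matrix.trace P := by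
  have hsym : ∀ i j, P j i = P i j := by
    intro i j
    conv_lhs => rw [← hPt]
    rfl
  rw [← hPP]
  unfold Matrix.trace Matrix.diag
  apply Finset.sum_nonneg
  intro i _
  rw [Matrix.mul_apply]
  apply Finset.sum_nonneg
  intro j _
  rw [hsym j i]
  exact mul_self_nonneg _

lemma normSqV_expand (x y z : Bil m) (a b : ℝ) :
    normSqV (fun X Y => x X Y + a • y X Y + b • z X Y)
      = normSqV x + a ^ 2 * normSqV y + b ^ 2 * normSqV z
        + 2 * a * innerV x y + 2 * b * innerV x z + 2 * (a * b) * innerV y z := by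
  unfold normSqV innerV dotProduct
  have expand : ∀ i j k, ((x (bvec m i) (bvec m j) + a • y (bvec m i) (bvec m j)
        + b • z (bvec m i) (bvec m j)) k) ^ 2
      = (x (bvec m i) (bvec m j) k)^2 + a^2 * (y (bvec m i) (bvec m j) k)^2
        + b^2 * (z (bvec m i) (bvec m j) k)^2
        + (2*a) * (x (bvec m i) (bvec m j) k * y (bvec m i) (bvec m j) k)
        + (2*b) * (x (bvec m i) (bvec m j) k * z (bvec m i) (bvec m j) k)
        + (2*(a*b)) * (y (bvec m i) (bvec m j) k * z (bvec m i) (bvec m j) k) := by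
    intro i j k; simp only [Pi.add_apply, Pi.smul_apply, smul_eq_mul]; ring
  simp only [expand, Finset.sum_add_distrib, ← Finset.mul_sum]

lemma normSq_comb_le (x y z : Bil m) : ∃ C : ℝ, ∀ q : ℝ, 0 < q → q ≤ 1 →
    normSqV (fun X Y => x X Y + q • y X Y + (q^2) • z X Y) ≤ normSqV x + q * C := by
  refine ⟨normSqV y + normSqV z + 2*|innerV x y| + 2*|innerV x z| + 2*|innerV y z|, ?_⟩
  intro q hq hq1
  rw [normSqV_expand]
  have hq2 : q^2 ≤ q := by nlinarith
  have hq4 : (q^2)^2 ≤ q := by nlinarith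
  have h1 : q^2 * normSqV y ≤ q * normSqV y :=
    mul_le_mul_of_nonneg_right hq2 (normSqV_nonneg y)
  have h2 : (q^2)^2 * normSqV z ≤ q * normSqV z :=
    mul_le_mul_of_nonneg_right hq4 (normSqV_nonneg z)
  have h3 : 2 * q * innerV x y ≤ q * (2 * |innerV x y|) := by
    have := le_abs_self (innerV x y)
    nlinarith
  have h4 : 2 * q^2 * innerV x z ≤ q * (2 * |innerV x z|) := by
    have := le_abs_self (innerV x z)
    have habs : (0:ℝ) ≤ |innerV x z| := abs_nonneg _
    nlinarith
  have h5 : 2 * (q * q^2) * innerV y z ≤ q * (2 * |innerV y z|) := by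
    have hle := le_abs_self (innerV y z)
    have habs : (0:ℝ) ≤ |innerV y z| := abs_nonneg _
    have hq3 : q * q^2 ≤ q := by nlinarith
    have e1 : 2*(q*q^2)*innerV y z ≤ 2*(q*q^2)*|innerV y z| :=
      mul_le_mul_of_nonneg_left hle (by positivity)
    have e2 : 2*(q*q^2)*|innerV y z| ≤ 2*q*|innerV y z| := by
      nlinarith [mul_le_mul_of_nonneg_right hq3 habs]
    linarith
  linarith [h1, h2, h3, h4, h5]

end Toolkit6
section Family
variable {m : ℕ}

/-- the symplectic stretching family. -/
def gm (u v : Vec m) (q : ℝ) : Matrix (Fin m) (Fin m) ℝ :=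
  1 + (q - 1) • Matrix.vecMulVec u u + (q⁻¹ - 1) • Matrix.vecMulVec v v

lemma uv_facts {J : Matrix (Fin m) (Fin m) ℝ} (hJskew : Jᵀ = -J) (hJsq : J * J = -1)
    {u : Vec m} (huu : u ⬝ᵥ u = 1) :
    (J.mulVec u) ⬝ᵥ (J.mulVec u) = 1 ∧ u ⬝ᵥ (J.mulVec u) = 0
      ∧ J.mulVec (J.mulVec u) = -u := by
  have hJv : J.mulVec (J.mulVec u) = -u := by
    rw [Matrix.mulVec_mulVec, hJsq, Matrix.neg_mulVec, Matrix.one_mulVec]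
  refine ⟨?_, ?_, hJv⟩
  · rw [dot_mulVec_left, Matrix.mulVec_mulVec, hJskew, Matrix.neg_mul, hJsq, neg_neg,
      Matrix.one_mulVec, huu]
  · have h1 : u ⬝ᵥ (J.mulVec u) = -(u ⬝ᵥ (J.mulVec u)) := by
      conv_lhs => rw [dotProduct_comm, dot_mulVec_left, hJskew, Matrix.neg_mulVec,
        dotProduct_neg]
    linarith

section UV
variable {u v : Vec m} (huu : u ⬝ᵥ u = 1) (hvv : v ⬝ᵥ v = 1) (huv : u ⬝ᵥ v = 0)

lemma gm_mulVec (q : ℝ) (X : Vec m) :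
    (gm u v q).mulVec X = X + ((q - 1) * (u ⬝ᵥ X)) • u + ((q⁻¹ - 1) * (v ⬝ᵥ X)) • v := by
  unfold gm
  rw [Matrix.add_mulVec, Matrix.add_mulVec, Matrix.one_mulVec, Matrix.smul_mulVec,
    Matrix.smul_mulVec, _root_.vecMulVec_mulVec, _root_.vecMulVec_mulVec, smul_smul, smul_smul]

include huu hvv huv in
lemma gm_mul {q q' : ℝ} (hq : q ≠ 0) (hq' : q' ≠ 0) :
    gm u v q * gm u v q' = gm u v (q * q') := by
  have hvu : v ⬝ᵥ u = 0 := by rw [dotProduct_comm]; exact huv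
  unfold gm
  simp only [mul_add, add_mul, Matrix.mul_smul, Matrix.smul_mul, one_mul, mul_one,
    _root_.vecMulVec_mul_vecMulVec, huu, hvv, huv, hvu, one_smul, zero_smul, smul_zero, smul_smul]
  match_scalars
  · ring
  · field_simp
    ring
  · field_simp
    ring

lemma gm_one : gm u v 1 = 1 := by
  unfold gm
  norm_num

include huu hvv huv in
lemma gm_inv {q : ℝ} (hq : q ≠ 0) : (gm u v q)⁻¹ = gm u v q⁻¹ :=
  Matrix.inv_eq_right_inv (by
    rw [gm_mul huu hvv huv hq (inv_ne_zero hq), mul_inv_cancel₀ hq, gm_one])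

include huu hvv huv in
lemma gm_unit {q : ℝ} (hq : q ≠ 0) : IsUnit (gm u v q) := by
  have h1 : gm u v q * gm u v q⁻¹ = 1 := by
    rw [gm_mul huu hvv huv hq (inv_ne_zero hq), mul_inv_cancel₀ hq, gm_one]
  have h2 : gm u v q⁻¹ * gm u v q = 1 := by
    rw [gm_mul huu hvv huv (inv_ne_zero hq) hq, inv_mul_cancel₀ hq, gm_one]
  exact ⟨⟨gm u v q, gm u v q⁻¹, h1, h2⟩, rfl⟩

end UV

section SymplFam
variable {J : Matrix (Fin m) (Fin m) ℝ} (hJskew : Jᵀ = -J) (hJsq : J * J = -1)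
variable {u v : Vec m} (huu : u ⬝ᵥ u = 1) (hvv : v ⬝ᵥ v = 1) (huv : u ⬝ᵥ v = 0)
variable (hJu : J.mulVec u = v) (hJv : J.mulVec v = -u)

include hJskew huu hvv huv hJu hJv in
lemma gm_JgJ {q : ℝ} (hq : q ≠ 0) : gm u v q * (J * gm u v q) = J := by
  have hvu : v ⬝ᵥ u = 0 := by rw [dotProduct_comm]; exact huv
  have hvecmulJ : ∀ w : Vec m, Matrix.vecMul w J = -(J.mulVec w) := by
    intro w
    rw [← Matrix.mulVec_transpose, hJskew, Matrix.neg_mulVec]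
  have hUJ : Matrix.vecMulVec u u * J = -(Matrix.vecMulVec u v) := by
    rw [_root_.vecMulVec_mul, hvecmulJ, hJu]
    ext i j; simp [Matrix.vecMulVec_apply]
  have hVJ : Matrix.vecMulVec v v * J = Matrix.vecMulVec v u := by
    rw [_root_.vecMulVec_mul, hvecmulJ, hJv]
    ext i j; simp [Matrix.vecMulVec_apply]
  have hJU : J * Matrix.vecMulVec u u = Matrix.vecMulVec v u := by
    rw [_root_.mul_vecMulVec, hJu]
  have hJV : J * Matrix.vecMulVec v v = -(Matrix.vecMulVec u v) := by
    rw [_root_.mul_vecMulVec, hJv]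
    ext i j; simp [Matrix.vecMulVec_apply]
  unfold gm
  simp only [mul_add, add_mul, Matrix.mul_smul, Matrix.smul_mul, one_mul, mul_one,
    hUJ, hVJ, hJU, hJV, smul_neg, mul_neg, neg_mul,
    _root_.vecMulVec_mul_vecMulVec, huu, hvv, huv, hvu, one_smul, zero_smul, smul_zero, smul_smul]
  match_scalars
  · ring
  · field_simp
    ring
  · field_simp
    ring

include hJskew huu hvv huv hJu hJv in
lemma gm_sympl {q : ℝ} (hq : q ≠ 0) : IsSymplMat J (gm u v q) := by
  refine ⟨gm_unit huu hvv huv hq, fun X Y => ?_⟩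
  unfold sympForm
  have htr : (gm u v q)ᵀ = gm u v q := by
    unfold gm
    rw [Matrix.transpose_add, Matrix.transpose_add, Matrix.transpose_one,
      Matrix.transpose_smul, Matrix.transpose_smul, _root_.vecMulVec_transpose, _root_.vecMulVec_transpose]
  rw [dot_mulVec_left, htr, Matrix.mulVec_mulVec, Matrix.mulVec_mulVec,
    Matrix.mul_assoc, gm_JgJ hJskew huu hvv huv hJu hJv hq]

include hJskew huu hvv huv hJu hJv in
lemma reach_gm {q : ℝ} (hq : 0 < q) : Reach J (gm u v q) := by
  set L := Real.log q with hL
  refine ⟨fun x => gm u v (Real.exp (x * L)), fun x => gm u v (Real.exp (-(x * L))),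
    ?_, ?_, ?_, ?_, ?_, ?_⟩
  · unfold gm
    apply Continuous.add
    apply Continuous.add continuous_const
    · exact Continuous.smul ((Real.continuous_exp.comp (continuous_id.mul continuous_const)).sub
        continuous_const) continuous_const
    · apply Continuous.smul (f := fun x : ℝ => (Real.exp (x * L))⁻¹ - 1)
        (g := fun _ => Matrix.vecMulVec v v) _ continuous_const
      apply Continuous.sub _ continuous_const
      have : ∀ x : ℝ, (Real.exp (x * L))⁻¹ = Real.exp (-(x * L)) := by
        intro x; rw [Real.exp_neg]
      simp only [this]
      exact Real.continuous_exp.comp ((continuous_id.mul continuous_const).neg)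
  · unfold gm
    apply Continuous.add
    apply Continuous.add continuous_const
    · exact Continuous.smul ((Real.continuous_exp.comp
        ((continuous_id.mul continuous_const).neg)).sub continuous_const) continuous_const
    · apply Continuous.smul (f := fun x : ℝ => (Real.exp (-(x * L)))⁻¹ - 1)
        (g := fun _ => Matrix.vecMulVec v v) _ continuous_const
      apply Continuous.sub _ continuous_const
      have : ∀ x : ℝ, (Real.exp (-(x * L)))⁻¹ = Real.exp (x * L) := by
        intro x; rw [Real.exp_neg, inv_inv]
      simp only [this]
      exact Real.continuous_exp.comp (continuous_id.mul continuous_const)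
  · norm_num [gm_one]
  · show gm u v (Real.exp (1 * L)) = gm u v q
    rw [one_mul, hL, Real.exp_log hq]
  · intro x
    rw [gm_mul huu hvv huv (Real.exp_ne_zero _) (Real.exp_ne_zero _), ← Real.exp_add]
    norm_num [gm_one]
  · intro x
    exact gm_sympl hJskew huu hvv huv hJu hJv (Real.exp_ne_zero _)

end SymplFam
end Family
section Decomp
variable {m : ℕ}

/-- component of `μ` with both arguments in `W` and value in `W ⊕ ℝu`. -/
def A0v (μ : Bil m) (v : Vec m) : Bil m :=
  fun X Y => μ X Y - (v ⬝ᵥ Y) • μ X v - (v ⬝ᵥ X) • μ v Y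

/-- component of `μ` with a `v`-argument. -/
def A1v (μ : Bil m) (v : Vec m) : Bil m :=
  fun X Y => (v ⬝ᵥ Y) • μ X v + (v ⬝ᵥ X) • μ v Y

/-- the reduced bracket. -/
def muP (μ : Bil m) (u v : Vec m) : Bil m :=
  fun X Y => A0v μ v X Y - (u ⬝ᵥ A0v μ v X Y) • u

/-- weight-one part. -/
def mu1v (μ : Bil m) (u v : Vec m) : Bil m :=
  fun X Y => A1v μ v X Y - (u ⬝ᵥ A1v μ v X Y) • u + (u ⬝ᵥ A0v μ v X Y) • u

/-- weight-two part. -/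
def mu2v (μ : Bil m) (u v : Vec m) : Bil m :=
  fun X Y => (u ⬝ᵥ A1v μ v X Y) • u

variable {μ : Bil m} {u v : Vec m}
  (hlin1 : ∀ Y, IsLinearMap ℝ fun X => μ X Y) (hlin2 : ∀ X, IsLinearMap ℝ (μ X))
  (hskew : ∀ X Y, μ X Y = -μ Y X)
  (hcl : ∀ X, μ u X = 0) (hcr : ∀ X, μ X u = 0) (hvmu : ∀ X Y, v ⬝ᵥ μ X Y = 0)
  (huu : u ⬝ᵥ u = 1) (hvv : v ⬝ᵥ v = 1) (huv : u ⬝ᵥ v = 0)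

include hskew in
lemma mu_vv : μ v v = 0 := by
  funext k
  have := congrFun (hskew v v) k
  simp only [Pi.neg_apply] at this
  show μ v v k = 0
  linarith

include hlin1 hlin2 hskew hcl hcr in
lemma mu_expand2 (a b c d : ℝ) (X Y : Vec m) :
    μ (X + a • u + b • v) (Y + c • u + d • v) = μ X Y + d • μ X v + b • μ v Y := by
  set W := Y + c • u + d • v with hW
  have h1 : μ (X + a • u + b • v) W = μ X W + b • μ v W := by
    rw [(hlin1 W).map_add, (hlin1 W).map_add, (hlin1 W).map_smul, (hlin1 W).map_smul,
      hcl, smul_zero, add_zero]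
  rw [h1, hW]
  have h2 : μ X (Y + c • u + d • v) = μ X Y + d • μ X v := by
    rw [(hlin2 X).map_add, (hlin2 X).map_add, (hlin2 X).map_smul, (hlin2 X).map_smul,
      hcr, smul_zero, add_zero]
  have h3 : μ v (Y + c • u + d • v) = μ v Y := by
    rw [(hlin2 v).map_add, (hlin2 v).map_add, (hlin2 v).map_smul, (hlin2 v).map_smul,
      hcr, smul_zero, add_zero, mu_vv hskew, smul_zero, add_zero]
  rw [h2, h3]

include hlin1 hlin2 hskew hcl hcr hvmu huu hvv huv in
lemma decomp_eq {q : ℝ} (hq : q ≠ 0) :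
    mact (gm u v q) μ = fun X Y =>
      muP μ u v X Y + q • mu1v μ u v X Y + (q^2) • mu2v μ u v X Y := by
  funext X Y
  unfold mact
  have e2 : ∀ W : Vec m, (gm u v q⁻¹).mulVec W
      = W + ((q⁻¹ - 1) * (u ⬝ᵥ W)) • u + ((q - 1) * (v ⬝ᵥ W)) • v := by
    intro W; rw [gm_mulVec, inv_inv]
  rw [gm_inv huu hvv huv hq, e2, e2,
    mu_expand2 hlin1 hlin2 hskew hcl hcr ((q⁻¹ - 1) * (u ⬝ᵥ X)) ((q - 1) * (v ⬝ᵥ X))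
      ((q⁻¹ - 1) * (u ⬝ᵥ Y)) ((q - 1) * (v ⬝ᵥ Y)) X Y]
  set B := μ X Y + ((q - 1) * (v ⬝ᵥ Y)) • μ X v + ((q - 1) * (v ⬝ᵥ X)) • μ v Y with hB
  rw [gm_mulVec]
  have hvB : v ⬝ᵥ B = 0 := by
    rw [hB]
    simp [dotProduct_add, dotProduct_smul, hvmu]
  rw [hvB, mul_zero, zero_smul, add_zero, hB]
  simp only [muP, mu1v, mu2v, A0v, A1v, dotProduct_add, dotProduct_sub,
    dotProduct_smul, smul_eq_mul]
  module

include huu in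
lemma orth_P2 : innerV (muP μ u v) (mu2v μ u v) = 0 := by
  have hpt : ∀ X Y, (muP μ u v X Y) ⬝ᵥ (mu2v μ u v X Y) = 0 := by
    intro X Y
    unfold muP mu2v
    rw [sub_dotProduct, dotProduct_smul, smul_dotProduct,
      dotProduct_smul, huu, dotProduct_comm (A0v μ v X Y) u]
    simp only [smul_eq_mul]
    ring
  unfold innerV
  simp [hpt]

-- linearity of A0v
include hlin2 in
lemma A0v_add_right (X a b : Vec m) :
    A0v μ v X (a + b) = A0v μ v X a + A0v μ v X b := by
  unfold A0v
  rw [(hlin2 X).map_add, (hlin2 v).map_add, dotProduct_add]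
  module

include hlin2 in
lemma A0v_smul_right (X : Vec m) (c : ℝ) (a : Vec m) :
    A0v μ v X (c • a) = c • A0v μ v X a := by
  unfold A0v
  rw [(hlin2 X).map_smul, (hlin2 v).map_smul, dotProduct_smul]
  simp only [smul_eq_mul]
  module

include hlin1 in
lemma A0v_add_left (a b Y : Vec m) :
    A0v μ v (a + b) Y = A0v μ v a Y + A0v μ v b Y := by
  unfold A0v
  rw [(hlin1 Y).map_add, (hlin1 v).map_add, dotProduct_add]
  module

include hlin1 in
lemma A0v_smul_left (c : ℝ) (a Y : Vec m) :
    A0v μ v (c • a) Y = c • A0v μ v a Y := by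
  unfold A0v
  rw [(hlin1 Y).map_smul, (hlin1 v).map_smul, dotProduct_smul]
  simp only [smul_eq_mul]
  module

include hskew hvv in
lemma A0v_v_right (X : Vec m) : A0v μ v X v = 0 := by
  unfold A0v
  rw [hvv, mu_vv hskew, one_smul, smul_zero]
  module

include hskew hvv in
lemma A0v_v_left (Y : Vec m) : A0v μ v v Y = 0 := by
  unfold A0v
  rw [hvv, mu_vv hskew, one_smul, smul_zero]
  module

lemma bsum_zero (L : Vec m → ℝ) (hadd : ∀ a b, L (a + b) = L a + L b)
    (hsmul : ∀ (c : ℝ) a, L (c • a) = c • L a) (w : Vec m) (hLw : L w = 0) :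
    ∑ j, w j * L (bvec m j) = 0 := by
  rw [bsumR L hadd hsmul w, hLw]

include hlin1 hlin2 hskew hvv huu in
lemma orth_12 : innerV (mu1v μ u v) (mu2v μ u v) = 0 := by
  have hpt : ∀ X Y, (mu1v μ u v X Y) ⬝ᵥ (mu2v μ u v X Y)
      = (v ⬝ᵥ Y) * ((u ⬝ᵥ A0v μ v X Y) * (u ⬝ᵥ μ X v))
        + (v ⬝ᵥ X) * ((u ⬝ᵥ A0v μ v X Y) * (u ⬝ᵥ μ v Y)) := by
    intro X Y
    unfold mu1v mu2v
    rw [add_dotProduct, sub_dotProduct, dotProduct_smul,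
      smul_dotProduct, dotProduct_smul, smul_dotProduct,
      dotProduct_smul, huu, dotProduct_comm (A1v μ v X Y) u]
    have hexp : u ⬝ᵥ A1v μ v X Y
        = (v ⬝ᵥ Y) * (u ⬝ᵥ μ X v) + (v ⬝ᵥ X) * (u ⬝ᵥ μ v Y) := by
      unfold A1v
      rw [dotProduct_add, dotProduct_smul, dotProduct_smul]
      simp [smul_eq_mul]
    rw [hexp]
    simp only [smul_eq_mul]
    ring
  unfold innerV
  simp only [hpt, Finset.sum_add_distrib, dot_bvec]
  have h1 : ∀ i, ∑ j, v j * ((u ⬝ᵥ A0v μ v (bvec m i) (bvec m j)) * (u ⬝ᵥ μ (bvec m i) v))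
      = 0 := by
    intro i
    apply bsum_zero (fun Y => (u ⬝ᵥ A0v μ v (bvec m i) Y) * (u ⬝ᵥ μ (bvec m i) v))
    · intro a b
      rw [A0v_add_right hlin2, dotProduct_add, add_mul]
    · intro c a
      rw [A0v_smul_right hlin2, dotProduct_smul]
      simp only [smul_eq_mul]
      ring
    · rw [A0v_v_right hskew hvv, dotProduct_zero, zero_mul]
  have h2 : ∀ j, ∑ i, v i * ((u ⬝ᵥ A0v μ v (bvec m i) (bvec m j)) * (u ⬝ᵥ μ v (bvec m j)))
      = 0 := by
    intro j
    apply bsum_zero (fun X => (u ⬝ᵥ A0v μ v X (bvec m j)) * (u ⬝ᵥ μ v (bvec m j)))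
    · intro a b
      rw [A0v_add_left hlin1, dotProduct_add, add_mul]
    · intro c a
      rw [A0v_smul_left hlin1, dotProduct_smul]
      simp only [smul_eq_mul]
      ring
    · rw [A0v_v_left hskew hvv, dotProduct_zero, zero_mul]
  rw [show (∑ i, ∑ j, v j * ((u ⬝ᵥ A0v μ v (bvec m i) (bvec m j)) * (u ⬝ᵥ μ (bvec m i) v)))
      = 0 from Finset.sum_eq_zero fun i _ => h1 i]
  rw [show (∑ i, ∑ j, v i * ((u ⬝ᵥ A0v μ v (bvec m i) (bvec m j)) * (u ⬝ᵥ μ v (bvec m j))))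
      = 0 from ?_]
  · ring
  · rw [Finset.sum_comm]
    exact Finset.sum_eq_zero fun j _ => h2 j

include hlin1 hlin2 hskew hvv huu in
lemma orth_P1 : innerV (muP μ u v) (mu1v μ u v) = 0 := by
  have hpt : ∀ X Y, (muP μ u v X Y) ⬝ᵥ (mu1v μ u v X Y)
      = (v ⬝ᵥ Y) * (A0v μ v X Y ⬝ᵥ μ X v) + (v ⬝ᵥ X) * (A0v μ v X Y ⬝ᵥ μ v Y)
        - ((v ⬝ᵥ Y) * ((u ⬝ᵥ A0v μ v X Y) * (u ⬝ᵥ μ X v))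
          + (v ⬝ᵥ X) * ((u ⬝ᵥ A0v μ v X Y) * (u ⬝ᵥ μ v Y))) := by
    intro X Y
    unfold muP mu1v
    rw [sub_dotProduct, smul_dotProduct]
    rw [dotProduct_add, dotProduct_sub, dotProduct_smul,
      dotProduct_smul, dotProduct_add, dotProduct_sub,
      dotProduct_smul, dotProduct_smul, huu,
      dotProduct_comm u (A0v μ v X Y)]
    have hexpA1 : A0v μ v X Y ⬝ᵥ A1v μ v X Y
        = (v ⬝ᵥ Y) * (A0v μ v X Y ⬝ᵥ μ X v) + (v ⬝ᵥ X) * (A0v μ v X Y ⬝ᵥ μ v Y) := by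
      unfold A1v
      rw [dotProduct_add, dotProduct_smul, dotProduct_smul]
      simp [smul_eq_mul]
    have hexpu : u ⬝ᵥ A1v μ v X Y
        = (v ⬝ᵥ Y) * (u ⬝ᵥ μ X v) + (v ⬝ᵥ X) * (u ⬝ᵥ μ v Y) := by
      unfold A1v
      rw [dotProduct_add, dotProduct_smul, dotProduct_smul]
      simp [smul_eq_mul]
    rw [hexpA1, hexpu]
    simp only [smul_eq_mul]
    ring
  unfold innerV
  simp only [hpt, Finset.sum_sub_distrib, Finset.sum_add_distrib, dot_bvec]
  have h1 : ∀ i, ∑ j, v j * (A0v μ v (bvec m i) (bvec m j) ⬝ᵥ μ (bvec m i) v) = 0 := by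
    intro i
    apply bsum_zero (fun Y => A0v μ v (bvec m i) Y ⬝ᵥ μ (bvec m i) v)
    · intro a b
      rw [A0v_add_right hlin2, add_dotProduct]
    · intro c a
      rw [A0v_smul_right hlin2, smul_dotProduct]
    · rw [A0v_v_right hskew hvv, zero_dotProduct]
  have h2 : ∀ j, ∑ i, v i * (A0v μ v (bvec m i) (bvec m j) ⬝ᵥ μ v (bvec m j)) = 0 := by
    intro j
    apply bsum_zero (fun X => A0v μ v X (bvec m j) ⬝ᵥ μ v (bvec m j))
    · intro a b
      rw [A0v_add_left hlin1, add_dotProduct]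
    · intro c a
      rw [A0v_smul_left hlin1, smul_dotProduct]
    · rw [A0v_v_left hskew hvv, zero_dotProduct]
  have h3 : ∀ i, ∑ j, v j * ((u ⬝ᵥ A0v μ v (bvec m i) (bvec m j)) * (u ⬝ᵥ μ (bvec m i) v))
      = 0 := by
    intro i
    apply bsum_zero (fun Y => (u ⬝ᵥ A0v μ v (bvec m i) Y) * (u ⬝ᵥ μ (bvec m i) v))
    · intro a b
      rw [A0v_add_right hlin2, dotProduct_add, add_mul]
    · intro c a
      rw [A0v_smul_right hlin2, dotProduct_smul]
      simp only [smul_eq_mul]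
      ring
    · rw [A0v_v_right hskew hvv, dotProduct_zero, zero_mul]
  have h4 : ∀ j, ∑ i, v i * ((u ⬝ᵥ A0v μ v (bvec m i) (bvec m j)) * (u ⬝ᵥ μ v (bvec m j)))
      = 0 := by
    intro j
    apply bsum_zero (fun X => (u ⬝ᵥ A0v μ v X (bvec m j)) * (u ⬝ᵥ μ v (bvec m j)))
    · intro a b
      rw [A0v_add_left hlin1, dotProduct_add, add_mul]
    · intro c a
      rw [A0v_smul_left hlin1, dotProduct_smul]
      simp only [smul_eq_mul]
      ring
    · rw [A0v_v_left hskew hvv, dotProduct_zero, zero_mul]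
  rw [Finset.sum_eq_zero fun i (_ : i ∈ Finset.univ) => h1 i]
  rw [Finset.sum_eq_zero fun i (_ : i ∈ Finset.univ) => h3 i]
  rw [show (∑ i, ∑ j, v i * (A0v μ v (bvec m i) (bvec m j) ⬝ᵥ μ v (bvec m j))) = 0 from by
    rw [Finset.sum_comm]; exact Finset.sum_eq_zero fun j _ => h2 j]
  rw [show (∑ i, ∑ j, v i * ((u ⬝ᵥ A0v μ v (bvec m i) (bvec m j)) * (u ⬝ᵥ μ v (bvec m j))))
      = 0 from by
    rw [Finset.sum_comm]; exact Finset.sum_eq_zero fun j _ => h4 j]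
  ring

end Decomp
section Reduced
variable {m : ℕ}

/-- the reduced projection. -/
def Pred (P : Matrix (Fin m) (Fin m) ℝ) (u v : Vec m) : Matrix (Fin m) (Fin m) ℝ :=
  P - Matrix.vecMulVec u u - Matrix.vecMulVec v v

lemma Pred_mulVec (P : Matrix (Fin m) (Fin m) ℝ) (u v X : Vec m) :
    (Pred P u v).mulVec X = P.mulVec X - (u ⬝ᵥ X) • u - (v ⬝ᵥ X) • v := by
  unfold Pred
  rw [Matrix.sub_mulVec, Matrix.sub_mulVec, _root_.vecMulVec_mulVec, _root_.vecMulVec_mulVec]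

lemma reduced_props {J P : Matrix (Fin m) (Fin m) ℝ} {μ : Bil m} {u v : Vec m}
    (hJskew : Jᵀ = -J)
    (hlin1 : ∀ Y, IsLinearMap ℝ fun X => μ X Y) (hlin2 : ∀ X, IsLinearMap ℝ (μ X))
    (hskew : ∀ X Y, μ X Y = -μ Y X) (hjac : IsJacobi μ) (hnil : IsNilpotentBil μ)
    (hclosed : IsClosedForm (sympForm J) μ)
    (hcl : ∀ X, μ u X = 0) (hcr : ∀ X, μ X u = 0) (hvmu : ∀ X Y, v ⬝ᵥ μ X Y = 0)
    (huu : u ⬝ᵥ u = 1) (hvv : v ⬝ᵥ v = 1) (huv : u ⬝ᵥ v = 0)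
    (hJu : J.mulVec u = v) (hJv : J.mulVec v = -u)
    (hPt : Pᵀ = P) (hPP : P * P = P) (hPJ : P * J = J * P)
    (hsup : Supported P μ) (hPu : P.mulVec u = u) (hPv : P.mulVec v = v) :
    NilBracket (muP μ u v) ∧ IsClosedForm (sympForm J) (muP μ u v)
      ∧ Supported (Pred P u v) (muP μ u v)
      ∧ (Pred P u v)ᵀ = Pred P u v ∧ Pred P u v * Pred P u v = Pred P u v
      ∧ Pred P u v * J = J * Pred P u v
      ∧ Matrix.trace (Pred P u v) = Matrix.trace P - 2
      ∧ 0 ≤ Matrix.trace (Pred P u v) := by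
  have hvu : v ⬝ᵥ u = 0 := by rw [dotProduct_comm]; exact huv
  -- transpose
  have hP't : (Pred P u v)ᵀ = Pred P u v := by
    unfold Pred
    rw [Matrix.transpose_sub, Matrix.transpose_sub, hPt, _root_.vecMulVec_transpose, _root_.vecMulVec_transpose]
  -- idempotent
  have hPU : P * Matrix.vecMulVec u u = Matrix.vecMulVec u u := by rw [_root_.mul_vecMulVec, hPu]
  have hPV : P * Matrix.vecMulVec v v = Matrix.vecMulVec v v := by rw [_root_.mul_vecMulVec, hPv]
  have hUP : Matrix.vecMulVec u u * P = Matrix.vecMulVec u u := by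
    rw [_root_.vecMulVec_mul, ← Matrix.mulVec_transpose, hPt, hPu]
  have hVP : Matrix.vecMulVec v v * P = Matrix.vecMulVec v v := by
    rw [_root_.vecMulVec_mul, ← Matrix.mulVec_transpose, hPt, hPv]
  have hP2 : Pred P u v * Pred P u v = Pred P u v := by
    unfold Pred
    simp only [Matrix.sub_mul, Matrix.mul_sub, hPP, hPU, hPV, hUP, hVP,
      _root_.vecMulVec_mul_vecMulVec, huu, hvv, huv, hvu, one_smul, zero_smul]
    abel
  -- commutes with J
  have hvecmulJ : ∀ w : Vec m, Matrix.vecMul w J = -(J.mulVec w) := by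
    intro w
    rw [← Matrix.mulVec_transpose, hJskew, Matrix.neg_mulVec]
  have hUJ : Matrix.vecMulVec u u * J = -(Matrix.vecMulVec u v) := by
    rw [_root_.vecMulVec_mul, hvecmulJ, hJu]
    ext i j; simp [Matrix.vecMulVec_apply]
  have hVJ : Matrix.vecMulVec v v * J = Matrix.vecMulVec v u := by
    rw [_root_.vecMulVec_mul, hvecmulJ, hJv]
    ext i j; simp [Matrix.vecMulVec_apply]
  have hJU : J * Matrix.vecMulVec u u = Matrix.vecMulVec v u := by rw [_root_.mul_vecMulVec, hJu]
  have hJV : J * Matrix.vecMulVec v v = -(Matrix.vecMulVec u v) := by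
    rw [_root_.mul_vecMulVec, hJv]
    ext i j; simp [Matrix.vecMulVec_apply]
  have hP'J : Pred P u v * J = J * Pred P u v := by
    unfold Pred
    rw [Matrix.sub_mul, Matrix.sub_mul, Matrix.mul_sub, Matrix.mul_sub, hPJ, hUJ, hVJ, hJU, hJV]
    abel
  -- trace
  have htr : Matrix.trace (Pred P u v) = Matrix.trace P - 2 := by
    unfold Pred
    rw [Matrix.trace_sub, Matrix.trace_sub, trace_vecMulVec, trace_vecMulVec, huu, hvv]
    ring
  have htr0 : 0 ≤ Matrix.trace (Pred P u v) := trace_nonneg_proj hP't hP2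
  -- the key formula
  have heq : ∀ X Y, muP μ u v X Y
      = (Pred P u v).mulVec (μ ((Pred P u v).mulVec X) ((Pred P u v).mulVec Y)) := by
    intro X Y
    have hA0 : μ ((Pred P u v).mulVec X) ((Pred P u v).mulVec Y) = A0v μ v X Y := by
      rw [Pred_mulVec, Pred_mulVec]
      have e1 : ∀ W, μ (P.mulVec X - (u ⬝ᵥ X) • u - (v ⬝ᵥ X) • v) W
          = μ X W - (v ⬝ᵥ X) • μ v W := by
        intro W
        rw [(hlin1 W).map_sub, (hlin1 W).map_sub, (hlin1 W).map_smul, (hlin1 W).map_smul,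
          hsup.argl hPP, hcl, smul_zero, sub_zero]
      rw [e1]
      have e2 : μ X (P.mulVec Y - (u ⬝ᵥ Y) • u - (v ⬝ᵥ Y) • v) = μ X Y - (v ⬝ᵥ Y) • μ X v := by
        rw [(hlin2 X).map_sub, (hlin2 X).map_sub, (hlin2 X).map_smul, (hlin2 X).map_smul,
          hsup.argr hPP, hcr, smul_zero, sub_zero]
      have e3 : μ v (P.mulVec Y - (u ⬝ᵥ Y) • u - (v ⬝ᵥ Y) • v) = μ v Y := by
        rw [(hlin2 v).map_sub, (hlin2 v).map_sub, (hlin2 v).map_smul, (hlin2 v).map_smul,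
          hsup.argr hPP, hcr, smul_zero, sub_zero, mu_vv hskew, smul_zero, sub_zero]
      rw [e2, e3]
      unfold A0v
      module
    rw [hA0]
    have hPA0 : P.mulVec (A0v μ v X Y) = A0v μ v X Y := by
      unfold A0v
      rw [Matrix.mulVec_sub, Matrix.mulVec_sub, Matrix.mulVec_smul, Matrix.mulVec_smul,
        hsup.value hPP, hsup.value hPP, hsup.value hPP]
    have hvA0 : v ⬝ᵥ A0v μ v X Y = 0 := by
      unfold A0v
      rw [dotProduct_sub, dotProduct_sub, dotProduct_smul,
        dotProduct_smul, hvmu, hvmu, hvmu]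
      simp
    rw [Pred_mulVec, hPA0, hvA0, zero_smul, sub_zero]
    rfl
  -- values of μ under Pred
  have hpredval : ∀ a b, (Pred P u v).mulVec (μ a b) = μ a b - (u ⬝ᵥ μ a b) • u := by
    intro a b
    rw [Pred_mulVec, hsup.value hPP, hvmu, zero_smul, sub_zero]
  have hpvr : ∀ W a b, μ W ((Pred P u v).mulVec (μ a b)) = μ W (μ a b) := by
    intro W a b
    rw [hpredval, (hlin2 W).map_sub, (hlin2 W).map_smul, hcr, smul_zero, sub_zero]
  have hpvl : ∀ W a b, μ ((Pred P u v).mulVec (μ a b)) W = μ (μ a b) W := by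
    intro W a b
    rw [hpredval, (hlin1 W).map_sub, (hlin1 W).map_smul, hcl, smul_zero, sub_zero]
  -- skewness of muP
  have hsk : IsSkewBil (muP μ u v) := by
    refine ⟨?_, ?_, ?_⟩
    · intro Y
      refine ⟨?_, ?_⟩
      · intro a b
        unfold muP
        rw [A0v_add_left hlin1, dotProduct_add]
        module
      · intro c a
        unfold muP
        rw [A0v_smul_left hlin1, dotProduct_smul]
        simp only [smul_eq_mul]
        module
    · intro X
      refine ⟨?_, ?_⟩
      · intro a b
        unfold muP
        rw [A0v_add_right hlin2, dotProduct_add]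
        module
      · intro c a
        unfold muP
        rw [A0v_smul_right hlin2, dotProduct_smul]
        simp only [smul_eq_mul]
        module
    · intro X Y
      have hA0anti : A0v μ v Y X = -A0v μ v X Y := by
        unfold A0v
        rw [hskew Y X, hskew Y v, hskew v X]
        module
      unfold muP
      rw [hA0anti, dotProduct_neg]
      module
  -- Jacobi
  have hkey : ∀ X Y Z, muP μ u v (muP μ u v X Y) Z
      = (Pred P u v).mulVec (μ (μ ((Pred P u v).mulVec X) ((Pred P u v).mulVec Y))
          ((Pred P u v).mulVec Z)) := by
    intro X Y Z
    have h1 : (Pred P u v).mulVec (muP μ u v X Y) = muP μ u v X Y := by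
      conv_lhs => rw [heq X Y]
      rw [Matrix.mulVec_mulVec, hP2, ← heq X Y]
    rw [heq (muP μ u v X Y) Z, h1, heq X Y, hpvl]
  have hjac' : IsJacobi (muP μ u v) := by
    intro X Y Z
    rw [hkey X Y Z, hkey Y Z X, hkey Z X Y, ← Matrix.mulVec_add, ← Matrix.mulVec_add,
      hjac _ _ _, Matrix.mulVec_zero]
  -- nilpotency
  have had : ∀ k, 1 ≤ k → ∀ (Xs : ℕ → Vec m) (Y : Vec m),
      adPow (muP μ u v) Xs k Y
        = (Pred P u v).mulVec
            (adPow μ (fun i => (Pred P u v).mulVec (Xs i)) k ((Pred P u v).mulVec Y)) := by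
    intro k hk
    induction k, hk using Nat.le_induction with
    | base =>
      intro Xs Y
      show muP μ u v (Xs 0) Y = (Pred P u v).mulVec (μ ((Pred P u v).mulVec (Xs 0))
        ((Pred P u v).mulVec Y))
      exact heq _ _
    | succ n hn ih =>
      intro Xs Y
      show muP μ u v (Xs n) (adPow (muP μ u v) Xs n Y) = _
      rw [ih Xs Y, heq]
      have hfix : (Pred P u v).mulVec ((Pred P u v).mulVec
          (adPow μ (fun i => (Pred P u v).mulVec (Xs i)) n ((Pred P u v).mulVec Y)))
          = (Pred P u v).mulVec
            (adPow μ (fun i => (Pred P u v).mulVec (Xs i)) n ((Pred P u v).mulVec Y)) := by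
        rw [Matrix.mulVec_mulVec, hP2]
      rw [hfix]
      obtain ⟨i, rfl⟩ : ∃ i, n = i + 1 := ⟨n - 1, by omega⟩
      show (Pred P u v).mulVec (μ ((Pred P u v).mulVec (Xs (i+1)))
        ((Pred P u v).mulVec (μ _ _))) = _
      rw [hpvr]
      rfl
  have hnil' : IsNilpotentBil (muP μ u v) := by
    obtain ⟨K, hK⟩ := hnil
    refine ⟨K + 1, fun Xs Y => ?_⟩
    rw [had (K+1) (by omega) Xs Y]
    show (Pred P u v).mulVec (μ _ (adPow μ (fun i => (Pred P u v).mulVec (Xs i)) K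
      ((Pred P u v).mulVec Y))) = 0
    rw [hK, (hlin2 _).map_zero, Matrix.mulVec_zero]
  -- closedness
  have hform : ∀ w Z, sympForm J ((Pred P u v).mulVec w) Z
      = sympForm J w ((Pred P u v).mulVec Z) := by
    intro w Z
    unfold sympForm
    rw [dot_mulVec_left, hP't, Matrix.mulVec_mulVec, hP'J, ← Matrix.mulVec_mulVec]
  have hclosed' : IsClosedForm (sympForm J) (muP μ u v) := by
    intro X Y Z
    rw [heq X Y, heq Y Z, heq Z X, hform, hform, hform]
    exact hclosed _ _ _
  -- supportedness
  have hsup' : Supported (Pred P u v) (muP μ u v) := by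
    intro X Y
    conv_rhs => rw [heq ((Pred P u v).mulVec X) ((Pred P u v).mulVec Y)]
    rw [Matrix.mulVec_mulVec, hP2, Matrix.mulVec_mulVec, hP2, Matrix.mulVec_mulVec, hP2, ← heq]
  exact ⟨⟨hsk, hjac', hnil'⟩, hclosed', hsup', hP't, hP2, hP'J, htr, htr0⟩

end Reduced
section MainInduction
variable {m : ℕ}

lemma main_induction (J : Matrix (Fin m) (Fin m) ℝ) (hJskew : Jᵀ = -J) (hJsq : J * J = -1) :
    ∀ (k : ℕ) (P : Matrix (Fin m) (Fin m) ℝ), Pᵀ = P → P * P = P → P * J = J * P →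
      Matrix.trace P ≤ (k : ℝ) →
      ∀ μ : Bil m, NilBracket μ → IsClosedForm (sympForm J) μ → Supported P μ →
      ((∀ ε : ℝ, 0 < ε → ∃ g, Reach J g ∧ normSqV (mact g μ) < ε)
        ∧ (μ ≠ 0 → ∀ M : ℝ, ∃ g, Reach J g ∧ M < normSqV (mact g μ))) := by
  intro k
  induction k using Nat.strong_induction_on with
  | _ k IH =>
  intro P hPt hPP hPJ htr μ hμ hclosed hsup
  by_cases hμ0 : μ = 0
  · constructor
    · intro ε hε
      refine ⟨1, reach_one J, ?_⟩
      rw [mact_one, hμ0]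
      simpa [normSqV_zero] using hε
    · intro h
      exact absurd hμ0 h
  · obtain ⟨u, huu, hPu, hcl, hcr⟩ := exists_central hμ hμ0 hPP hsup
    obtain ⟨hlin1, hlin2, hskew⟩ := hμ.1
    set v := J.mulVec u with hv
    obtain ⟨hvv, huv, hJv⟩ := uv_facts hJskew hJsq huu
    have hJu : J.mulVec u = v := rfl
    have hPv : P.mulVec v = v := by
      rw [hv, Matrix.mulVec_mulVec, hPJ, ← Matrix.mulVec_mulVec, hPu]
    have hvmu : ∀ X Y, v ⬝ᵥ μ X Y = 0 := by
      intro X Y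
      have h := hclosed X Y u
      rw [hcr, hcl] at h
      unfold sympForm at h
      rw [zero_dotProduct, zero_dotProduct, add_zero, add_zero] at h
      rw [dotProduct_comm]
      exact h
    obtain ⟨hμ'nil, hμ'closed, hμ'sup, hP't, hP2, hP'J, htr', htr0'⟩ :=
      reduced_props hJskew hlin1 hlin2 hskew hμ.2.1 hμ.2.2 hclosed hcl hcr hvmu huu hvv huv
        hJu hJv hPt hPP hPJ hsup hPu hPv
    have hk2 : 2 ≤ k := by
      have h2 : (2:ℝ) ≤ Matrix.trace P := by linarith
      have h3 : (2:ℝ) ≤ (k:ℝ) := le_trans h2 htr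
      exact_mod_cast h3
    have htrk : Matrix.trace (Pred P u v) ≤ ((k - 2 : ℕ) : ℝ) := by
      have : ((k - 2 : ℕ) : ℝ) = (k : ℝ) - 2 := by
        push_cast [Nat.cast_sub hk2]
        ring
      rw [this, htr']
      linarith
    have IH' := IH (k-2) (by omega) (Pred P u v) hP't hP2 hP'J htrk (muP μ u v)
      hμ'nil hμ'closed hμ'sup
    have ho1 := orth_P1 (hlin1 := hlin1) (hlin2 := hlin2) (hskew := hskew) (hvv := hvv)
      (huu := huu)
    have ho2 := orth_P2 (huu := huu) (μ := μ) (v := v)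
    have ho12 := orth_12 (hlin1 := hlin1) (hlin2 := hlin2) (hskew := hskew) (hvv := hvv)
      (huu := huu)
    have hdec : ∀ q : ℝ, q ≠ 0 → mact (gm u v q) μ
        = fun X Y => muP μ u v X Y + q • mu1v μ u v X Y + (q^2) • mu2v μ u v X Y :=
      fun q hq => decomp_eq hlin1 hlin2 hskew hcl hcr hvmu huu hvv huv hq
    obtain ⟨a0, ha0⟩ : ∃ x : ℝ, x = normSqV (muP μ u v) := ⟨_, rfl⟩
    obtain ⟨a1, ha1⟩ : ∃ x : ℝ, x = normSqV (mu1v μ u v) := ⟨_, rfl⟩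
    obtain ⟨a2, ha2⟩ : ∃ x : ℝ, x = normSqV (mu2v μ u v) := ⟨_, rfl⟩
    have hnorm : ∀ q : ℝ, q ≠ 0 →
        normSqV (mact (gm u v q) μ) = a0 + q^2 * a1 + (q^2)^2 * a2 := by
      intro q hq
      rw [hdec q hq, normSqV_comb _ _ _ ho1 ho2 ho12, ← ha0, ← ha1, ← ha2]
    have ha0n : 0 ≤ a0 := by rw [ha0]; exact normSqV_nonneg _
    have ha1n : 0 ≤ a1 := by rw [ha1]; exact normSqV_nonneg _
    have ha2n : 0 ≤ a2 := by rw [ha2]; exact normSqV_nonneg _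
    constructor
    · -- arbitrarily small values
      intro ε hε
      obtain ⟨h, hreachh, hh⟩ := IH'.1 (ε/2) (by linarith)
      obtain ⟨C, hC⟩ := normSq_comb_le (mact h (muP μ u v)) (mact h (mu1v μ u v))
        (mact h (mu2v μ u v))
      have hCp : (0:ℝ) < |C| + 1 := by positivity
      obtain ⟨q, hqdef⟩ : ∃ x : ℝ, x = min 1 (ε / (2 * (|C| + 1))) := ⟨_, rfl⟩
      have hq0 : 0 < q := by rw [hqdef]; exact lt_min one_pos (by positivity)
      have hq1 : q ≤ 1 := by rw [hqdef]; exact min_le_left _ _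
      refine ⟨h * gm u v q, hreachh.mul (reach_gm hJskew huu hvv huv hJu hJv hq0), ?_⟩
      rw [mact_mul, hdec q (ne_of_gt hq0), mact_comb]
      have hbound := hC q hq0 hq1
      have hqC : q * C ≤ ε/2 := by
        have hmin : q ≤ ε / (2*(|C|+1)) := by rw [hqdef]; exact min_le_right _ _
        have h1 : q * C ≤ q * |C| := mul_le_mul_of_nonneg_left (le_abs_self C) hq0.le
        have h2 : q * |C| ≤ (ε / (2*(|C|+1))) * |C| :=
          mul_le_mul_of_nonneg_right hmin (abs_nonneg C)
        have h3 : (ε / (2*(|C|+1))) * |C| ≤ ε/2 := by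
          rw [div_mul_eq_mul_div, div_le_div_iff₀ (by positivity) (by norm_num)]
          nlinarith [abs_nonneg C]
        linarith
      linarith
    · -- arbitrarily large values
      intro _ M
      by_cases hzero : a1 + a2 = 0
      · -- here μ = muP μ u v and we recurse
        have ha1z : a1 = 0 := by linarith
        have ha2z : a2 = 0 := by linarith
        have hsum : μ = fun X Y => muP μ u v X Y + (1:ℝ) • mu1v μ u v X Y
            + ((1:ℝ)^2) • mu2v μ u v X Y := by
          have h1 := hdec 1 one_ne_zero
          rw [gm_one, mact_one] at h1
          exact h1
        have hz : normSqV (fun X Y => mu1v μ u v X Y + (1:ℝ) • mu2v μ u v X Y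
            + (0:ℝ) • mu2v μ u v X Y) = 0 := by
          rw [normSqV_expand]
          have hself : innerV (mu2v μ u v) (mu2v μ u v) = normSqV (mu2v μ u v) :=
            (normSqV_eq_innerV _).symm
          rw [hself, ho12, ← ha1, ← ha2, ha1z, ha2z]
          ring
        have hcoeff := normSqV_coeff_eq_zero hz
        have hμeq : μ = muP μ u v := by
          have hzero' : (fun X Y => μ X Y - muP μ u v X Y) = 0 := by
            apply bil_eq_zero
            · intro Y
              refine ⟨fun a b => ?_, fun c a => ?_⟩
              · rw [(hlin1 Y).map_add, ((hμ'nil.1.1 Y)).map_add]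
                module
              · rw [(hlin1 Y).map_smul, ((hμ'nil.1.1 Y)).map_smul]
                module
            · intro X
              refine ⟨fun a b => ?_, fun c a => ?_⟩
              · rw [(hlin2 X).map_add, ((hμ'nil.1.2.1 X)).map_add]
                module
              · rw [(hlin2 X).map_smul, ((hμ'nil.1.2.1 X)).map_smul]
                module
            · intro i j
              have h1 := hcoeff i j
              simp only [one_smul, zero_smul, add_zero] at h1
              have h2 : μ (bvec m i) (bvec m j) = muP μ u v (bvec m i) (bvec m j)
                  + (mu1v μ u v (bvec m i) (bvec m j) + mu2v μ u v (bvec m i) (bvec m j)) := by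
                conv_lhs => rw [hsum]
                simp only [one_pow, one_smul]
                abel
              rw [h2, h1]
              abel
          funext X Y
          have := congrFun (congrFun hzero' X) Y
          simp only [Pi.zero_apply] at this
          exact sub_eq_zero.1 this
        have hμ'0 : muP μ u v ≠ 0 := by
          rw [← hμeq]
          exact hμ0
        obtain ⟨g, hreach, hg⟩ := IH'.2 hμ'0 M
        refine ⟨g, hreach, ?_⟩
        rw [hμeq]
        exact hg
      · -- degenerate in the expanding direction
        have hc : 0 < a1 + a2 := lt_of_le_of_ne (by linarith) (Ne.symm hzero)
        obtain ⟨q, hqdef⟩ : ∃ x : ℝ, x = |M| / (a1 + a2) + 1 := ⟨_, rfl⟩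
        have hdnn : 0 ≤ |M| / (a1 + a2) := div_nonneg (abs_nonneg M) hc.le
        have hq1 : 1 ≤ q := by rw [hqdef]; linarith
        have hq0 : 0 < q := by linarith
        refine ⟨gm u v q, reach_gm hJskew huu hvv huv hJu hJv hq0, ?_⟩
        rw [hnorm q (ne_of_gt hq0)]
        have hqc : q * (a1 + a2) = |M| + (a1 + a2) := by
          rw [hqdef]
          field_simp
        have hqq : q ≤ q^2 := by nlinarith
        have h1 : q * (a1 + a2) ≤ q^2 * (a1 + a2) := mul_le_mul_of_nonneg_right hqq hc.le
        have hq2 : q^2 ≤ (q^2)^2 := by nlinarith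
        have h2 : q^2 * a2 ≤ (q^2)^2 * a2 := mul_le_mul_of_nonneg_right hq2 ha2n
        have hdist : q^2 * (a1 + a2) = q^2 * a1 + q^2 * a2 := by ring
        have hM : M ≤ |M| := le_abs_self M
        linarith
end MainInduction
/-- for every nonzero `μ ∈ N_s` and every `s < 0` there exists `g ∈ Sp(n,ℝ)` with
`‖g.μ‖² = −4s`, equivalently `tr(Ric_{g.μ}) = s`: a non-abelian symplectic nilpotent Lie group
admits compatible metrics of any prescribed negative scalar curvature. -/
theorem any_scalar_curvature (n : ℕ) (hn : 1 ≤ n)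
    (J : Matrix (Fin (2 * n)) (Fin (2 * n)) ℝ) (hJskew : Jᵀ = -J) (hJsq : J * J = -1)
    (μ : Bil (2 * n)) (hμ : NilBracket μ) (hclosed : IsClosedForm (sympForm J) μ)
    (hμ0 : μ ≠ 0) (s : ℝ) (hs : s < 0) :
    ∃ g : Matrix (Fin (2 * n)) (Fin (2 * n)) ℝ, IsSymplMat J g ∧
      normSqV (mact g μ) = -4 * s ∧ Matrix.trace (RicM (mact g μ)) = s := by
  have htr : Matrix.trace (1 : Matrix (Fin (2*n)) (Fin (2*n)) ℝ) ≤ ((2*n : ℕ) : ℝ) := by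
    rw [Matrix.trace_one]
    simp
  have hsup : Supported (1 : Matrix (Fin (2*n)) (Fin (2*n)) ℝ) μ := by
    intro X Y
    simp [Matrix.one_mulVec]
  have h := main_induction J hJskew hJsq (2*n) 1 Matrix.transpose_one (one_mul 1)
    (by rw [one_mul, mul_one]) htr μ hμ hclosed hsup
  have hr : (0:ℝ) < -4 * s := by linarith
  obtain ⟨g₁, hre₁, hlt₁⟩ := h.1 (-4*s) hr
  obtain ⟨g₂, hre₂, hlt₂⟩ := h.2 hμ0 (-4*s)
  obtain ⟨g, hsym, heq⟩ := exists_exact hμ.1 hre₁ hre₂ (-4*s) (le_of_lt hlt₁) (le_of_lt hlt₂)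
  refine ⟨g, hsym, heq, ?_⟩
  rw [trace_RicM, heq]
  ring
end
end

section
/- For every μ ∈ W there exist c ∈ ℝ and D ∈ Der(μ) such that Ric^{q}_μ = c·I + D. (Consequently every hypercomplex 8-dimensional nilpotent Lie group admits a minimal compatible metric.) -/
open scoped BigOperators
open Matrix

noncomputable section

/-- the first standard quaternionic structure on `ℝ⁴`. -/
def J1four : Matrix (Fin 4) (Fin 4) ℝ := !![0,-1,0,0; 1,0,0,0; 0,0,0,-1; 0,0,1,0]

/-- the second standard quaternionic structure on `ℝ⁴`. -/
def J2four : Matrix (Fin 4) (Fin 4) ℝ := !![0,0,-1,0; 0,0,0,1; 1,0,0,0; 0,-1,0,0]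

/-- the third standard quaternionic structure on `ℝ⁴`. -/
def J3four : Matrix (Fin 4) (Fin 4) ℝ := !![0,0,0,-1; 0,0,-1,0; 0,1,0,0; 1,0,0,0]

/-- block-diagonal extension of a 4×4 matrix to `ℝ⁸ = ℝ⁴ ⊕ ℝ⁴`. -/
def Joct (A : Matrix (Fin 4) (Fin 4) ℝ) : Matrix (Fin 8) (Fin 8) ℝ :=
  Matrix.reindex finSumFinEquiv finSumFinEquiv (Matrix.fromBlocks A 0 0 A)

/-- `J₁` on `ℝ⁸`. -/
def Q1 : Matrix (Fin 8) (Fin 8) ℝ := Joct J1four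
/-- `J₂` on `ℝ⁸`. -/
def Q2 : Matrix (Fin 8) (Fin 8) ℝ := Joct J2four
/-- `J₃` on `ℝ⁸`. -/
def Q3 : Matrix (Fin 8) (Fin 8) ℝ := Joct J3four

/-- membership in the first factor `n₁` of `ℝ⁸ = n₁ ⊕ n₂`. -/
def inN1 (X : Vec 8) : Prop := ∀ i : Fin 8, 4 ≤ (i : ℕ) → X i = 0

/-- membership in the second factor `n₂` of `ℝ⁸ = n₁ ⊕ n₂`. -/
def inN2 (X : Vec 8) : Prop := ∀ i : Fin 8, (i : ℕ) < 4 → X i = 0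

/-- the subspace `W ⊂ V`: skew bilinear maps with values in `n₂` vanishing on `n₂`. -/
def memW (μ : Bil 8) : Prop :=
  IsSkewBil μ ∧ (∀ X Y, inN2 (μ X Y)) ∧ ∀ X Y, inN2 X → μ X Y = 0

/-- integrability of the almost complex structure `J` for the bracket `μ`. -/
def IsIntegrable {m : ℕ} (J : Matrix (Fin m) (Fin m) ℝ) (μ : Bil m) : Prop :=
  ∀ X Y, μ (J.mulVec X) (J.mulVec Y)
    = μ X Y + J.mulVec (μ (J.mulVec X) Y) + J.mulVec (μ X (J.mulVec Y))

/-- the subspace `W_h ⊂ W` of hypercomplex brackets. -/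
def memWh (μ : Bil 8) : Prop :=
  memW μ ∧ IsIntegrable Q1 μ ∧ IsIntegrable Q2 μ ∧ IsIntegrable Q3 μ

/-- membership in `GL(2,ℍ) = {g ∈ GL(8,ℝ) : gJᵢ = Jᵢg}`. -/
def IsGL2H (g : Matrix (Fin 8) (Fin 8) ℝ) : Prop :=
  IsUnit g ∧ g * Q1 = Q1 * g ∧ g * Q2 = Q2 * g ∧ g * Q3 = Q3 * g

/-- membership in `Sp(2) = GL(2,ℍ) ∩ O(8)`. -/
def IsSp2 (k : Matrix (Fin 8) (Fin 8) ℝ) : Prop := IsGL2H k ∧ kᵀ * k = 1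

/-- the quaternionic (invariant) Ricci operator
`Ric^q = (1/4)(Ric − J₁ Ric J₁ − J₂ Ric J₂ − J₃ Ric J₃)`. -/
def Ricq (μ : Bil 8) : Matrix (Fin 8) (Fin 8) ℝ :=
  (1/4 : ℝ) • (RicM μ - Q1 * RicM μ * Q1 - Q2 * RicM μ * Q2 - Q3 * RicM μ * Q3)


/-! ### Auxiliary material for the proof -/

/-- explicit form of `Q1`. -/
def Q1ex : Matrix (Fin 8) (Fin 8) ℝ :=
  !![0,-1,0,0,0,0,0,0; 1,0,0,0,0,0,0,0; 0,0,0,-1,0,0,0,0; 0,0,1,0,0,0,0,0;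
     0,0,0,0,0,-1,0,0; 0,0,0,0,1,0,0,0; 0,0,0,0,0,0,0,-1; 0,0,0,0,0,0,1,0]

/-- explicit form of `Q2`. -/
def Q2ex : Matrix (Fin 8) (Fin 8) ℝ :=
  !![0,0,-1,0,0,0,0,0; 0,0,0,1,0,0,0,0; 1,0,0,0,0,0,0,0; 0,-1,0,0,0,0,0,0;
     0,0,0,0,0,0,-1,0; 0,0,0,0,0,0,0,1; 0,0,0,0,1,0,0,0; 0,0,0,0,0,-1,0,0]

/-- explicit form of `Q3`. -/
def Q3ex : Matrix (Fin 8) (Fin 8) ℝ :=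
  !![0,0,0,-1,0,0,0,0; 0,0,-1,0,0,0,0,0; 0,1,0,0,0,0,0,0; 1,0,0,0,0,0,0,0;
     0,0,0,0,0,0,0,-1; 0,0,0,0,0,0,-1,0; 0,0,0,0,0,1,0,0; 0,0,0,0,1,0,0,0]

lemma Q1_eq : Q1 = Q1ex := by ext i j; fin_cases i <;> fin_cases j <;> rfl
lemma Q2_eq : Q2 = Q2ex := by ext i j; fin_cases i <;> fin_cases j <;> rfl
lemma Q3_eq : Q3 = Q3ex := by ext i j; fin_cases i <;> fin_cases j <;> rfl

/-- a generic symmetric block-diagonal matrix on `ℝ⁸ = ℝ⁴ ⊕ ℝ⁴`. -/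
def symBlk (a00 a01 a02 a03 a11 a12 a13 a22 a23 a33
    b00 b01 b02 b03 b11 b12 b13 b22 b23 b33 : ℝ) : Matrix (Fin 8) (Fin 8) ℝ :=
  !![a00,a01,a02,a03,0,0,0,0; a01,a11,a12,a13,0,0,0,0;
     a02,a12,a22,a23,0,0,0,0; a03,a13,a23,a33,0,0,0,0;
     0,0,0,0,b00,b01,b02,b03; 0,0,0,0,b01,b11,b12,b13;
     0,0,0,0,b02,b12,b22,b23; 0,0,0,0,b03,b13,b23,b33]

/-- a block-scalar diagonal matrix on `ℝ⁸ = ℝ⁴ ⊕ ℝ⁴`. -/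
def diagEx (a b : ℝ) : Matrix (Fin 8) (Fin 8) ℝ :=
  !![a,0,0,0,0,0,0,0; 0,a,0,0,0,0,0,0; 0,0,a,0,0,0,0,0; 0,0,0,a,0,0,0,0;
     0,0,0,0,b,0,0,0; 0,0,0,0,0,b,0,0; 0,0,0,0,0,0,b,0; 0,0,0,0,0,0,0,b]

set_option maxHeartbeats 1600000 in
/-- the quaternionic average of a symmetric block-diagonal matrix is block-scalar. -/
lemma avg_param (a00 a01 a02 a03 a11 a12 a13 a22 a23 a33
    b00 b01 b02 b03 b11 b12 b13 b22 b23 b33 : ℝ) :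
    (1/4 : ℝ) • (symBlk a00 a01 a02 a03 a11 a12 a13 a22 a23 a33 b00 b01 b02 b03 b11 b12 b13 b22 b23 b33
      - Q1ex * symBlk a00 a01 a02 a03 a11 a12 a13 a22 a23 a33 b00 b01 b02 b03 b11 b12 b13 b22 b23 b33 * Q1ex
      - Q2ex * symBlk a00 a01 a02 a03 a11 a12 a13 a22 a23 a33 b00 b01 b02 b03 b11 b12 b13 b22 b23 b33 * Q2ex
      - Q3ex * symBlk a00 a01 a02 a03 a11 a12 a13 a22 a23 a33 b00 b01 b02 b03 b11 b12 b13 b22 b23 b33 * Q3ex)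
      = diagEx ((a00+a11+a22+a33)/4) ((b00+b11+b22+b33)/4) := by
  simp [symBlk, diagEx, Q1ex, Q2ex, Q3ex]
  simp only [Matrix.vecCons, Fin.cons_inj, eq_iff_true_of_subsingleton, and_true, true_and]
  norm_num
  repeat' apply And.intro
  all_goals try ring
  all_goals (funext k; fin_cases k <;> rfl)

lemma diagIf (x y : ℝ) :
    Matrix.diagonal (fun i : Fin 8 => if (i : ℕ) < 4 then x else y) = diagEx x y := by
  ext i j; fin_cases i <;> fin_cases j <;> rfl

/-- projection of `ℝ⁸` onto `n₂`. -/
def projN2 (X : Vec 8) : Vec 8 := fun i => if (i : ℕ) < 4 then 0 else X i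

lemma projN2_inN2 (X : Vec 8) : inN2 (projN2 X) := fun _ hi => if_pos hi


/-- for every `μ ∈ W` there exist `c ∈ ℝ` and `D ∈ Der(μ)` with
`Ric^q_μ = cI + D`; consequently every hypercomplex 8-dimensional nilpotent Lie group admits a
minimal compatible metric. -/
theorem hypercomplex_minimal_exists (μ : Bil 8) (hμ : memW μ) :
    ∃ (c : ℝ) (D : Matrix (Fin 8) (Fin 8) ℝ),
      IsDerivation μ D ∧ Ricq μ = c • (1 : Matrix (Fin 8) (Fin 8) ℝ) + D := by
  obtain ⟨⟨hlin1, hlin2, hskew⟩, hW2, hW3⟩ := hμ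
  -- symmetry of the Ricci matrix
  have hsym : ∀ x y : Fin 8, RicM μ x y = RicM μ y x := by
    intro x y
    simp only [RicM, Matrix.of_apply]
    have h1 : (∑ i, ∑ j, μ (bvec 8 x) (bvec 8 i) j * μ (bvec 8 y) (bvec 8 i) j)
        = ∑ i, ∑ j, μ (bvec 8 y) (bvec 8 i) j * μ (bvec 8 x) (bvec 8 i) j :=
      Finset.sum_congr rfl fun i _ => Finset.sum_congr rfl fun j _ => mul_comm _ _
    have h2 : (∑ i, ∑ j, μ (bvec 8 i) (bvec 8 j) x * μ (bvec 8 i) (bvec 8 j) y)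
        = ∑ i, ∑ j, μ (bvec 8 i) (bvec 8 j) y * μ (bvec 8 i) (bvec 8 j) x :=
      Finset.sum_congr rfl fun i _ => Finset.sum_congr rfl fun j _ => mul_comm _ _
    rw [h1, h2]
  -- basis vectors of the second factor lie in n₂
  have hn2bvec : ∀ y : Fin 8, 4 ≤ (y : ℕ) → inN2 (bvec 8 y) := by
    intro y hy i hi
    have hne : i ≠ y := Fin.ne_of_val_ne (by omega)
    exact Pi.single_eq_of_ne hne 1
  -- the Ricci matrix is block diagonal
  have hblk : ∀ x y : Fin 8, (x : ℕ) < 4 → 4 ≤ (y : ℕ) → RicM μ x y = 0 := by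
    intro x y hx hy
    simp only [RicM, Matrix.of_apply]
    have h1 : ∀ i j : Fin 8, μ (bvec 8 y) (bvec 8 i) j = 0 := by
      intro i j
      rw [hW3 _ _ (hn2bvec y hy)]; rfl
    have h2 : ∀ i j : Fin 8, μ (bvec 8 i) (bvec 8 j) x = 0 :=
      fun i j => hW2 (bvec 8 i) (bvec 8 j) x hx
    simp [h1, h2]
  have hblk' : ∀ x y : Fin 8, 4 ≤ (x : ℕ) → (y : ℕ) < 4 → RicM μ x y = 0 :=
    fun x y hx hy => (hsym x y).trans (hblk y x hy hx)
  -- the Ricci matrix in explicit symmetric block form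
  have hRmat : RicM μ = symBlk (RicM μ 0 0) (RicM μ 0 1) (RicM μ 0 2) (RicM μ 0 3)
      (RicM μ 1 1) (RicM μ 1 2) (RicM μ 1 3) (RicM μ 2 2) (RicM μ 2 3) (RicM μ 3 3)
      (RicM μ 4 4) (RicM μ 4 5) (RicM μ 4 6) (RicM μ 4 7) (RicM μ 5 5) (RicM μ 5 6)
      (RicM μ 5 7) (RicM μ 6 6) (RicM μ 6 7) (RicM μ 7 7) := by
    ext i j
    fin_cases i <;> fin_cases j <;>
      first
        | rfl
        | exact hsym _ _
        | exact hblk _ _ (by decide) (by decide)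
        | exact hblk' _ _ (by decide) (by decide)
  -- the quaternionic Ricci operator is block scalar
  have hRicq : Ricq μ = diagEx ((RicM μ 0 0 + RicM μ 1 1 + RicM μ 2 2 + RicM μ 3 3)/4)
      ((RicM μ 4 4 + RicM μ 5 5 + RicM μ 6 6 + RicM μ 7 7)/4) := by
    unfold Ricq
    rw [Q1_eq, Q2_eq, Q3_eq]
    conv_lhs => rw [hRmat]
    exact avg_param _ _ _ _ _ _ _ _ _ _ _ _ _ _ _ _ _ _ _ _
  -- abbreviations
  set a : ℝ := (RicM μ 0 0 + RicM μ 1 1 + RicM μ 2 2 + RicM μ 3 3)/4 with ha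
  set b : ℝ := (RicM μ 4 4 + RicM μ 5 5 + RicM μ 6 6 + RicM μ 7 7)/4 with hb
  refine ⟨2*a - b,
    Matrix.diagonal (fun i : Fin 8 => if (i : ℕ) < 4 then b - a else 2*(b - a)), ?_, ?_⟩
  · -- the candidate derivation
    intro X Y
    have hadd : ∀ u v : Vec 8, μ (u + v) Y = μ u Y + μ v Y :=
      fun u v => (hlin1 Y).map_add u v
    have hsmul : ∀ (r : ℝ) (u : Vec 8), μ (r • u) Y = r • μ u Y :=
      fun r u => (hlin1 Y).map_smul r u
    have hadd2 : ∀ u v : Vec 8, μ X (u + v) = μ X u + μ X v :=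
      fun u v => (hlin2 X).map_add u v
    have hsmul2 : ∀ (r : ℝ) (u : Vec 8), μ X (r • u) = r • μ X u :=
      fun r u => (hlin2 X).map_smul r u
    have hL : (Matrix.diagonal (fun i : Fin 8 => if (i : ℕ) < 4 then b - a else 2*(b - a))).mulVec (μ X Y)
        = (2*(b - a)) • μ X Y := by
      funext i
      rw [Matrix.mulVec_diagonal]
      by_cases h : (i : ℕ) < 4
      · simp [h, hW2 X Y i h]
      · simp [h]
    have hDX : ∀ Z : Vec 8,
        (Matrix.diagonal (fun i : Fin 8 => if (i : ℕ) < 4 then b - a else 2*(b - a))).mulVec Z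
          = (b - a) • Z + (b - a) • projN2 Z := by
      intro Z
      funext i
      rw [Matrix.mulVec_diagonal]
      by_cases h : (i : ℕ) < 4 <;> simp [projN2, h] <;> ring
    rw [hL, hDX X, hDX Y, hadd, hsmul, hsmul, hadd2, hsmul2, hsmul2]
    rw [hW3 (projN2 X) Y (projN2_inN2 X)]
    have hXP : μ X (projN2 Y) = 0 := by
      rw [hskew X (projN2 Y), hW3 (projN2 Y) X (projN2_inN2 Y), neg_zero]
    rw [hXP]
    simp only [smul_zero, add_zero]
    rw [two_mul, add_smul]
  · -- the algebraic identity Ric^q = cI + D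
    rw [hRicq]
    have hCD : (2*a - b) • (1 : Matrix (Fin 8) (Fin 8) ℝ)
        + Matrix.diagonal (fun i : Fin 8 => if (i : ℕ) < 4 then b - a else 2*(b - a))
        = diagEx a b := by
      rw [← Matrix.diagonal_one, ← Matrix.diagonal_smul, Matrix.diagonal_add, ← diagIf a b]
      refine congrArg Matrix.diagonal (funext fun i => ?_)
      by_cases h : (i : ℕ) < 4 <;> simp [h] <;> ring
    rw [hCD]
end
end

section
/- Let μ ∈ W_h and g ∈ GL(2,ℍ). Then there exist k ∈ Sp(2) and t ≠ 0 such that g.μ = t·(k.μ). (An 8-dimensional hypercomplex nilpotent Lie group has, up to isometry and scaling, only one compatible left-invariant metric.) -/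
open scoped BigOperators
open Matrix

noncomputable section

/-! ### Auxiliary development for the proof -/

section Aux

abbrev M4' := Matrix (Fin 4) (Fin 4) ℝ
abbrev M8' := Matrix (Fin 8) (Fin 8) ℝ

def e8 : Fin 4 ⊕ Fin 4 ≃ Fin 8 := finSumFinEquiv

/-- build an 8×8 matrix from four 4×4 blocks. -/
def RB (A B C D : M4') : M8' := Matrix.reindex e8 e8 (Matrix.fromBlocks A B C D)

lemma RB_mul (A B C D A' B' C' D' : M4') :
    RB A B C D * RB A' B' C' D'
      = RB (A*A'+B*C') (A*B'+B*D') (C*A'+D*C') (C*B'+D*D') := by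
  simp only [RB, Matrix.reindex_apply, Matrix.submatrix_mul_equiv, Matrix.fromBlocks_multiply]

lemma RB_transpose (A B C D : M4') : (RB A B C D)ᵀ = RB Aᵀ Cᵀ Bᵀ Dᵀ := by
  simp only [RB, Matrix.reindex_apply, Matrix.transpose_submatrix, Matrix.fromBlocks_transpose]

lemma RB_ext {A B C D A' B' C' D' : M4'} (h1 : A = A') (h2 : B = B') (h3 : C = C')
    (h4 : D = D') : RB A B C D = RB A' B' C' D' := by rw [h1, h2, h3, h4]

lemma RB_one : RB 1 0 0 1 = (1 : M8') := by
  simp only [RB, Matrix.fromBlocks_one, Matrix.reindex_apply, Matrix.submatrix_one_equiv]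

lemma RB_inj {A B C D A' B' C' D' : M4'} (h : RB A B C D = RB A' B' C' D') :
    A = A' ∧ B = B' ∧ C = C' ∧ D = D' := by
  have := (Matrix.reindex e8 e8).injective
    (a₁ := Matrix.fromBlocks A B C D) (a₂ := Matrix.fromBlocks A' B' C' D') h
  exact Matrix.fromBlocks_inj.mp this

lemma eq_RB (A : M8') : A = RB ((Matrix.reindex e8.symm e8.symm A).toBlocks₁₁)
    ((Matrix.reindex e8.symm e8.symm A).toBlocks₁₂)
    ((Matrix.reindex e8.symm e8.symm A).toBlocks₂₁)
    ((Matrix.reindex e8.symm e8.symm A).toBlocks₂₂) := by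
  rw [RB, Matrix.fromBlocks_toBlocks, ← Matrix.reindex_symm]
  simp

lemma Q1_eq_s16 : Q1 = RB J1four 0 0 J1four := rfl
lemma Q2_eq_s16 : Q2 = RB J2four 0 0 J2four := rfl
lemma Q3_eq_s16 : Q3 = RB J3four 0 0 J3four := rfl

/-- the matrix of right-multiplication by a quaternion. -/
def RpM (p0 p1 p2 p3 : ℝ) : M4' :=
  !![p0,-p1,-p2,-p3; p1,p0,p3,-p2; p2,-p3,p0,p1; p3,p2,-p1,p0]

lemma comm4 (M : M4') (h1 : M * J1four = J1four * M) (h2 : M * J2four = J2four * M) :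
    M = RpM (M 0 0) (M 1 0) (M 2 0) (M 3 0) := by
  have t11 : M 1 1 = M 0 0 := by
    have e1_01 := congrFun (congrFun h1 0) 1
    simp [Matrix.mul_apply, Fin.sum_univ_four, J1four, J2four, Matrix.vecHead, Matrix.vecTail] at e1_01
    linarith [e1_01]
  have t22 : M 2 2 = M 0 0 := by
    have e2_02 := congrFun (congrFun h2 0) 2
    simp [Matrix.mul_apply, Fin.sum_univ_four, J1four, J2four, Matrix.vecHead, Matrix.vecTail] at e2_02
    linarith [e2_02]
  have t01 : M 0 1 = -M 1 0 := by
    have e1_00 := congrFun (congrFun h1 0) 0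
    simp [Matrix.mul_apply, Fin.sum_univ_four, J1four, J2four, Matrix.vecHead, Matrix.vecTail] at e1_00
    linarith [e1_00]
  have t32 : M 3 2 = -M 1 0 := by
    have e2_12 := congrFun (congrFun h2 1) 2
    simp [Matrix.mul_apply, Fin.sum_univ_four, J1four, J2four, Matrix.vecHead, Matrix.vecTail] at e2_12
    linarith [e2_12]
  have t31 : M 3 1 = M 2 0 := by
    have e1_21 := congrFun (congrFun h1 2) 1
    simp [Matrix.mul_apply, Fin.sum_univ_four, J1four, J2four, Matrix.vecHead, Matrix.vecTail] at e1_21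
    linarith [e1_21]
  have t02 : M 0 2 = -M 2 0 := by
    have e2_00 := congrFun (congrFun h2 0) 0
    simp [Matrix.mul_apply, Fin.sum_univ_four, J1four, J2four, Matrix.vecHead, Matrix.vecTail] at e2_00
    linarith [e2_00]
  have t21 : M 2 1 = -M 3 0 := by
    have e1_20 := congrFun (congrFun h1 2) 0
    simp [Matrix.mul_apply, Fin.sum_univ_four, J1four, J2four, Matrix.vecHead, Matrix.vecTail] at e1_20
    linarith [e1_20]
  have t12 : M 1 2 = M 3 0 := by
    have e2_10 := congrFun (congrFun h2 1) 0
    simp [Matrix.mul_apply, Fin.sum_univ_four, J1four, J2four, Matrix.vecHead, Matrix.vecTail] at e2_10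
    linarith [e2_10]
  have t33 : M 3 3 = M 0 0 := by
    have e2_13 := congrFun (congrFun h2 1) 3
    simp [Matrix.mul_apply, Fin.sum_univ_four, J1four, J2four, Matrix.vecHead, Matrix.vecTail] at e2_13
    linarith [e2_13, t11]
  have t23 : M 2 3 = M 1 0 := by
    have e2_03 := congrFun (congrFun h2 0) 3
    simp [Matrix.mul_apply, Fin.sum_univ_four, J1four, J2four, Matrix.vecHead, Matrix.vecTail] at e2_03
    linarith [e2_03, t01]
  have t13 : M 1 3 = -M 2 0 := by
    have e2_11 := congrFun (congrFun h2 1) 1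
    simp [Matrix.mul_apply, Fin.sum_univ_four, J1four, J2four, Matrix.vecHead, Matrix.vecTail] at e2_11
    linarith [e2_11, t31]
  have t03 : M 0 3 = -M 3 0 := by
    have e2_01 := congrFun (congrFun h2 0) 1
    simp [Matrix.mul_apply, Fin.sum_univ_four, J1four, J2four, Matrix.vecHead, Matrix.vecTail] at e2_01
    linarith [e2_01, t21]
  ext i j
  fin_cases i <;> fin_cases j <;> simp [RpM, Matrix.vecHead, Matrix.vecTail] <;>
    linarith [t01, t02, t03, t11, t12, t13, t21, t22, t23, t31, t32, t33]

lemma RpM_transpose (p0 p1 p2 p3 : ℝ) :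
    (RpM p0 p1 p2 p3)ᵀ = RpM p0 (-p1) (-p2) (-p3) := by
  ext i j; fin_cases i <;> fin_cases j <;> simp [RpM, Matrix.vecHead, Matrix.vecTail]

lemma RpM_mul_conj (p0 p1 p2 p3 : ℝ) :
    RpM p0 (-p1) (-p2) (-p3) * RpM p0 p1 p2 p3 = (p0^2+p1^2+p2^2+p3^2) • 1 := by
  ext i j; fin_cases i <;> fin_cases j <;>
    simp [RpM, Matrix.mul_apply, Fin.sum_univ_four, Matrix.one_apply,
      Matrix.vecHead, Matrix.vecTail] <;> ring

lemma RpM_commJ1 (p0 p1 p2 p3 : ℝ) :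
    RpM p0 p1 p2 p3 * J1four = J1four * RpM p0 p1 p2 p3 := by
  ext i j; fin_cases i <;> fin_cases j <;>
    simp [RpM, J1four, Matrix.mul_apply, Fin.sum_univ_four, Matrix.vecHead, Matrix.vecTail]

lemma RpM_commJ2 (p0 p1 p2 p3 : ℝ) :
    RpM p0 p1 p2 p3 * J2four = J2four * RpM p0 p1 p2 p3 := by
  ext i j; fin_cases i <;> fin_cases j <;>
    simp [RpM, J2four, Matrix.mul_apply, Fin.sum_univ_four, Matrix.vecHead, Matrix.vecTail]

lemma RpM_commJ3 (p0 p1 p2 p3 : ℝ) :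
    RpM p0 p1 p2 p3 * J3four = J3four * RpM p0 p1 p2 p3 := by
  ext i j; fin_cases i <;> fin_cases j <;>
    simp [RpM, J3four, Matrix.mul_apply, Fin.sum_univ_four, Matrix.vecHead, Matrix.vecTail]

lemma RpM_smul_one (a : ℝ) : RpM a 0 0 0 = a • 1 := by
  ext i j; fin_cases i <;> fin_cases j <;>
    simp [RpM, Matrix.one_apply, Matrix.vecHead, Matrix.vecTail]

lemma J1T : J1fourᵀ = -J1four := by
  ext i j; fin_cases i <;> fin_cases j <;> simp [J1four, Matrix.vecHead, Matrix.vecTail]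
lemma J2T : J2fourᵀ = -J2four := by
  ext i j; fin_cases i <;> fin_cases j <;> simp [J2four, Matrix.vecHead, Matrix.vecTail]

lemma comm4_symm (M : M4') (h1 : M * J1four = J1four * M) (h2 : M * J2four = J2four * M)
    (hs : Mᵀ = M) : M = (M 0 0) • 1 := by
  have hM := comm4 M h1 h2
  have e01 : M 0 1 = -M 1 0 := by
    have := congrFun (congrFun hM 0) 1
    simpa [RpM, Matrix.vecHead, Matrix.vecTail] using this
  have e02 : M 0 2 = -M 2 0 := by
    have := congrFun (congrFun hM 0) 2
    simpa [RpM, Matrix.vecHead, Matrix.vecTail] using this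
  have e03 : M 0 3 = -M 3 0 := by
    have := congrFun (congrFun hM 0) 3
    simpa [RpM, Matrix.vecHead, Matrix.vecTail] using this
  have s01 : M 0 1 = M 1 0 := by
    have := congrFun (congrFun hs 1) 0
    simpa [Matrix.transpose_apply] using this
  have s02 : M 0 2 = M 2 0 := by
    have := congrFun (congrFun hs 2) 0
    simpa [Matrix.transpose_apply] using this
  have s03 : M 0 3 = M 3 0 := by
    have := congrFun (congrFun hs 3) 0
    simpa [Matrix.transpose_apply] using this
  have h10 : M 1 0 = 0 := by linarith
  have h20 : M 2 0 = 0 := by linarith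
  have h30 : M 3 0 = 0 := by linarith
  nth_rewrite 1 [hM]
  rw [h10, h20, h30, RpM_smul_one]

lemma fse0 : e8.symm 0 = Sum.inl 0 := by decide
lemma fse1 : e8.symm 1 = Sum.inl 1 := by decide
lemma fse2 : e8.symm 2 = Sum.inl 2 := by decide
lemma fse3 : e8.symm 3 = Sum.inl 3 := by decide
lemma fse4 : e8.symm 4 = Sum.inr 0 := by decide
lemma fse5 : e8.symm 5 = Sum.inr 1 := by decide
lemma fse6 : e8.symm 6 = Sum.inr 2 := by decide
lemma fse7 : e8.symm 7 = Sum.inr 3 := by decide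

/-- the lower-triangular "Cholesky" factor. -/
def bmat (c₁ c₂ p0 p1 p2 p3 : ℝ) : M8' :=
  RB (c₁ • 1) 0 (c₂⁻¹ • RpM p0 p1 p2 p3) (c₂ • 1)

/-- its inverse. -/
def bmat' (c₁ c₂ p0 p1 p2 p3 : ℝ) : M8' :=
  RB (c₁⁻¹ • 1) 0 (-(c₁⁻¹ * (c₂⁻¹ * c₂⁻¹)) • RpM p0 p1 p2 p3) (c₂⁻¹ • 1)

lemma bmat_mul_inv {c₁ c₂ : ℝ} (hc₁ : c₁ ≠ 0) (hc₂ : c₂ ≠ 0) (p0 p1 p2 p3 : ℝ) :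
    bmat c₁ c₂ p0 p1 p2 p3 * bmat' c₁ c₂ p0 p1 p2 p3 = 1 := by
  rw [bmat, bmat', RB_mul, ← RB_one]
  apply RB_ext
  · rw [Matrix.smul_mul, Matrix.mul_smul, smul_smul, mul_inv_cancel₀ hc₁, one_smul, one_mul,
      Matrix.zero_mul, add_zero]
  · rw [Matrix.smul_mul, Matrix.mul_zero, smul_zero, Matrix.zero_mul, add_zero]
  · rw [Matrix.smul_mul, Matrix.mul_smul, Matrix.mul_one, Matrix.smul_mul, Matrix.one_mul,
      smul_smul, smul_smul, ← add_smul]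
    rw [show c₂⁻¹ * c₁⁻¹ + c₂ * -(c₁⁻¹ * (c₂⁻¹ * c₂⁻¹)) = 0 by (field_simp; try ring), zero_smul]
  · rw [Matrix.mul_zero, zero_add, Matrix.smul_mul, Matrix.mul_smul, Matrix.one_mul, smul_smul,
      mul_inv_cancel₀ hc₂, one_smul]

lemma bmat_inv_mul {c₁ c₂ : ℝ} (hc₁ : c₁ ≠ 0) (hc₂ : c₂ ≠ 0) (p0 p1 p2 p3 : ℝ) :
    bmat' c₁ c₂ p0 p1 p2 p3 * bmat c₁ c₂ p0 p1 p2 p3 = 1 := by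
  rw [bmat, bmat', RB_mul, ← RB_one]
  apply RB_ext
  · rw [Matrix.smul_mul, Matrix.mul_smul, smul_smul, inv_mul_cancel₀ hc₁, one_smul, one_mul,
      Matrix.zero_mul, add_zero]
  · rw [Matrix.smul_mul, Matrix.mul_zero, smul_zero, Matrix.zero_mul, add_zero]
  · rw [Matrix.smul_mul, Matrix.mul_smul, Matrix.mul_one, Matrix.smul_mul, Matrix.one_mul,
      smul_smul, smul_smul, ← add_smul]
    rw [show -(c₁⁻¹ * (c₂⁻¹ * c₂⁻¹)) * c₁ + c₂⁻¹ * c₂⁻¹ = 0 by (field_simp; try ring), zero_smul]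
  · rw [Matrix.mul_zero, zero_add, Matrix.smul_mul, Matrix.mul_smul, Matrix.one_mul, smul_smul,
      inv_mul_cancel₀ hc₂, one_smul]

lemma bmat_commQ1 (c₁ c₂ p0 p1 p2 p3 : ℝ) :
    bmat c₁ c₂ p0 p1 p2 p3 * Q1 = Q1 * bmat c₁ c₂ p0 p1 p2 p3 := by
  rw [bmat, Q1_eq_s16, RB_mul, RB_mul]
  apply RB_ext <;>
    simp [Matrix.smul_mul, Matrix.mul_smul, RpM_commJ1]

lemma bmat_commQ2 (c₁ c₂ p0 p1 p2 p3 : ℝ) :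
    bmat c₁ c₂ p0 p1 p2 p3 * Q2 = Q2 * bmat c₁ c₂ p0 p1 p2 p3 := by
  rw [bmat, Q2_eq_s16, RB_mul, RB_mul]
  apply RB_ext <;>
    simp [Matrix.smul_mul, Matrix.mul_smul, RpM_commJ2]

lemma bmat_commQ3 (c₁ c₂ p0 p1 p2 p3 : ℝ) :
    bmat c₁ c₂ p0 p1 p2 p3 * Q3 = Q3 * bmat c₁ c₂ p0 p1 p2 p3 := by
  rw [bmat, Q3_eq_s16, RB_mul, RB_mul]
  apply RB_ext <;>
    simp [Matrix.smul_mul, Matrix.mul_smul, RpM_commJ3]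

lemma bmat'_upper (c₁ c₂ p0 p1 p2 p3 : ℝ) (X : Vec 8) (i : Fin 8) (hi : (i : ℕ) < 4) :
    (bmat' c₁ c₂ p0 p1 p2 p3 *ᵥ X) i = c₁⁻¹ * X i := by
  fin_cases i <;>
    first
      | (exfalso; revert hi; decide)
      | (simp [bmat', RB, Matrix.mulVec, dotProduct, Fin.sum_univ_eight,
          Matrix.reindex_apply, Matrix.submatrix_apply, fse0, fse1, fse2, fse3, fse4,
          fse5, fse6, fse7, Matrix.one_apply, RpM, Matrix.vecHead, Matrix.vecTail])

lemma bmat_lower (c₁ c₂ p0 p1 p2 p3 : ℝ) (v : Vec 8) (hv : inN2 v) :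
    bmat c₁ c₂ p0 p1 p2 p3 *ᵥ v = c₂ • v := by
  have h0 := hv 0 (by decide)
  have h1 := hv 1 (by decide)
  have h2 := hv 2 (by decide)
  have h3 := hv 3 (by decide)
  funext i
  fin_cases i <;>
    simp [bmat, RB, Matrix.mulVec, dotProduct, Fin.sum_univ_eight,
      Matrix.reindex_apply, Matrix.submatrix_apply, fse0, fse1, fse2, fse3, fse4,
      fse5, fse6, fse7, Matrix.one_apply, RpM, Matrix.vecHead, Matrix.vecTail, h0, h1, h2, h3]

lemma posdef_quad (g : M8') (hg : IsUnit g) (x : Vec 8) (hx : x ≠ 0) :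
    0 < x ⬝ᵥ ((gᵀ * g) *ᵥ x) := by
  have hdet : IsUnit g.det := (Matrix.isUnit_iff_isUnit_det g).mp hg
  rw [← Matrix.mulVec_mulVec, Matrix.dotProduct_mulVec, Matrix.vecMul_transpose]
  have hw : g *ᵥ x ≠ 0 := by
    intro h0
    apply hx
    have : g⁻¹ *ᵥ (g *ᵥ x) = 0 := by rw [h0, Matrix.mulVec_zero]
    rwa [Matrix.mulVec_mulVec, Matrix.nonsing_inv_mul g hdet, Matrix.one_mulVec] at this
  have hnn : 0 ≤ (g *ᵥ x) ⬝ᵥ (g *ᵥ x) :=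
    Finset.sum_nonneg fun i _ => mul_self_nonneg _
  have hne : (g *ᵥ x) ⬝ᵥ (g *ᵥ x) ≠ 0 := fun h => hw (dotProduct_self_eq_zero.mp h)
  exact lt_of_le_of_ne hnn (Ne.symm hne)

end Aux


section Aux2

lemma RB_neg (A B C D : M4') : RB (-A) (-B) (-C) (-D) = -RB A B C D := by
  rw [RB, RB, ← Matrix.fromBlocks_neg, Matrix.reindex_apply, Matrix.reindex_apply]
  rfl

lemma Q1T8 : Q1ᵀ = -Q1 := by
  rw [Q1_eq_s16, RB_transpose, J1T, Matrix.transpose_zero]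
  simpa using RB_neg J1four 0 0 J1four
lemma Q2T8 : Q2ᵀ = -Q2 := by
  rw [Q2_eq_s16, RB_transpose, J2T, Matrix.transpose_zero]
  simpa using RB_neg J2four 0 0 J2four

lemma bmat_t_mul {c₁ c₂ a a' p0 p1 p2 p3 : ℝ} (hc₂ : c₂ ≠ 0)
    (h22 : c₂ * c₂ = a')
    (h11 : c₁ * c₁ + c₂⁻¹ * c₂⁻¹ * (p0^2+p1^2+p2^2+p3^2) = a) :
    (bmat c₁ c₂ p0 p1 p2 p3)ᵀ * bmat c₁ c₂ p0 p1 p2 p3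
      = RB (a • 1) (RpM p0 (-p1) (-p2) (-p3)) (RpM p0 p1 p2 p3) (a' • 1) := by
  rw [bmat, RB_transpose, Matrix.transpose_smul, Matrix.transpose_one, Matrix.transpose_zero,
    Matrix.transpose_smul, Matrix.transpose_smul, Matrix.transpose_one, RpM_transpose, RB_mul]
  apply RB_ext
  · rw [Matrix.smul_mul, Matrix.mul_smul, Matrix.one_mul, smul_smul,
      Matrix.smul_mul, Matrix.mul_smul, smul_smul, RpM_mul_conj, smul_smul, ← add_smul]
    rw [h11]
  · rw [Matrix.smul_mul, Matrix.mul_zero, smul_zero, zero_add,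
      Matrix.smul_mul, Matrix.mul_smul, Matrix.mul_one, smul_smul, inv_mul_cancel₀ hc₂, one_smul]
  · rw [Matrix.zero_mul, zero_add, Matrix.smul_mul, Matrix.mul_smul, Matrix.one_mul,
      smul_smul, mul_inv_cancel₀ hc₂, one_smul]
  · rw [Matrix.zero_mul, zero_add, Matrix.smul_mul, Matrix.mul_smul, Matrix.one_mul,
      smul_smul, h22]

end Aux2

/-- an 8-dimensional hypercomplex nilpotent Lie group has, up to isometry and
scaling, only one compatible left-invariant metric: for `μ ∈ W_h` and `g ∈ GL(2,ℍ)` there are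
`k ∈ Sp(2)` and `t ≠ 0` with `g.μ = t·(k.μ)`. -/
theorem hypercomplex_metric_unique (μ : Bil 8) (hμ : memWh μ)
    (g : Matrix (Fin 8) (Fin 8) ℝ) (hg : IsGL2H g) :
    ∃ (k : Matrix (Fin 8) (Fin 8) ℝ) (t : ℝ), t ≠ 0 ∧ IsSp2 k ∧
      mact g μ = t • mact k μ := by
  obtain ⟨⟨hskew, hval, hvan⟩, -, -, -⟩ := hμ
  obtain ⟨hgu, hgQ1, hgQ2, hgQ3⟩ := hg
  set A := gᵀ * g with hAdef
  have hAT : Aᵀ = A := by rw [hAdef, Matrix.transpose_mul, Matrix.transpose_transpose]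
  have hgT1 : gᵀ * Q1 = Q1 * gᵀ := by
    have h := congrArg Matrix.transpose hgQ1
    rw [Matrix.transpose_mul, Matrix.transpose_mul, Q1T8, Matrix.neg_mul, Matrix.mul_neg] at h
    exact (neg_inj.mp h).symm
  have hgT2 : gᵀ * Q2 = Q2 * gᵀ := by
    have h := congrArg Matrix.transpose hgQ2
    rw [Matrix.transpose_mul, Matrix.transpose_mul, Q2T8, Matrix.neg_mul, Matrix.mul_neg] at h
    exact (neg_inj.mp h).symm
  have hAQ1 : A * Q1 = Q1 * A := by
    calc gᵀ * g * Q1 = gᵀ * (g * Q1) := mul_assoc _ _ _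
      _ = gᵀ * (Q1 * g) := by rw [hgQ1]
      _ = gᵀ * Q1 * g := (mul_assoc _ _ _).symm
      _ = Q1 * gᵀ * g := by rw [hgT1]
      _ = Q1 * (gᵀ * g) := mul_assoc _ _ _
  have hAQ2 : A * Q2 = Q2 * A := by
    calc gᵀ * g * Q2 = gᵀ * (g * Q2) := mul_assoc _ _ _
      _ = gᵀ * (Q2 * g) := by rw [hgQ2]
      _ = gᵀ * Q2 * g := (mul_assoc _ _ _).symm
      _ = Q2 * gᵀ * g := by rw [hgT2]
      _ = Q2 * (gᵀ * g) := mul_assoc _ _ _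
  obtain ⟨A11, A12, A21, A22, hAB⟩ : ∃ P Q R S, A = RB P Q R S := ⟨_, _, _, _, eq_RB A⟩
  rw [hAB, Q1_eq_s16, RB_mul, RB_mul] at hAQ1
  rw [hAB, Q2_eq_s16, RB_mul, RB_mul] at hAQ2
  simp only [Matrix.mul_zero, Matrix.zero_mul, add_zero, zero_add] at hAQ1 hAQ2
  obtain ⟨c111, c121, c211, c221⟩ := RB_inj hAQ1
  obtain ⟨c112, c122, c212, c222⟩ := RB_inj hAQ2
  rw [hAB, RB_transpose] at hAT
  obtain ⟨s11, s12, s21, s22⟩ := RB_inj hAT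
  have hA11 : A11 = (A11 0 0) • 1 := comm4_symm A11 c111 c112 s11
  have hA22 : A22 = (A22 0 0) • 1 := comm4_symm A22 c221 c222 s22
  have hA21 : A21 = RpM (A21 0 0) (A21 1 0) (A21 2 0) (A21 3 0) := comm4 A21 c211 c212
  have hA12 : A12 = RpM (A21 0 0) (-(A21 1 0)) (-(A21 2 0)) (-(A21 3 0)) := by
    rw [← s12]
    conv_lhs => rw [hA21]
    rw [RpM_transpose]
  set a := A11 0 0 with hadef
  set a' := A22 0 0 with ha'def
  set p0 := A21 0 0 with hp0def
  set p1 := A21 1 0 with hp1def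
  set p2 := A21 2 0 with hp2def
  set p3 := A21 3 0 with hp3def
  have hAL : A = RB (a • 1) (RpM p0 (-p1) (-p2) (-p3)) (RpM p0 p1 p2 p3) (a' • 1) := by
    rw [hAB, ← hA11, ← hA12, ← hA21, ← hA22]
  -- positivity of a'
  have ha'pos : 0 < a' := by
    have hx : (fun i : Fin 8 => if i = 4 then (1:ℝ) else 0) ≠ 0 := by
      intro h
      have := congrFun h 4
      norm_num at this
    have hq := posdef_quad g hgu _ hx
    rw [← hAdef] at hq
    have hcomp : (fun i : Fin 8 => if i = 4 then (1:ℝ) else 0) ⬝ᵥ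
        (A *ᵥ fun i : Fin 8 => if i = 4 then (1:ℝ) else 0) = a' := by
      rw [hAL]
      simp [dotProduct, Matrix.mulVec, Fin.sum_univ_eight, RB, Matrix.reindex_apply,
        Matrix.submatrix_apply, fse0, fse1, fse2, fse3, fse4, fse5, fse6, fse7,
        Matrix.one_apply, Matrix.smul_apply, RpM, Matrix.vecHead, Matrix.vecTail]
    rw [hcomp] at hq
    exact hq
  have ha'ne : a' ≠ 0 := ne_of_gt ha'pos
  -- positivity of the Schur complement
  have hkeypos : 0 < a * a' - (p0^2+p1^2+p2^2+p3^2) := by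
    have hxne : (fun i : Fin 8 => if i = 0 then a' else if i = 4 then -p0 else if i = 5 then -p1
        else if i = 6 then -p2 else if i = 7 then -p3 else 0) ≠ 0 := by
      intro h
      have := congrFun h 0
      norm_num at this
      exact ha'ne this
    have hq := posdef_quad g hgu _ hxne
    rw [← hAdef] at hq
    have hcomp : (fun i : Fin 8 => if i = 0 then a' else if i = 4 then -p0 else if i = 5 then -p1
        else if i = 6 then -p2 else if i = 7 then -p3 else 0) ⬝ᵥ
        (A *ᵥ fun i : Fin 8 => if i = 0 then a' else if i = 4 then -p0 else if i = 5 then -p1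
        else if i = 6 then -p2 else if i = 7 then -p3 else 0)
        = a' * (a * a' - (p0^2+p1^2+p2^2+p3^2)) := by
      rw [hAL]
      simp [dotProduct, Matrix.mulVec, Fin.sum_univ_eight, RB, Matrix.reindex_apply,
        Matrix.submatrix_apply, fse0, fse1, fse2, fse3, fse4, fse5, fse6, fse7,
        Matrix.one_apply, Matrix.smul_apply, RpM, Matrix.vecHead, Matrix.vecTail]
      ring
    rw [hcomp] at hq
    nlinarith [hq, ha'pos]
  -- the Cholesky scalars
  set c₂ := Real.sqrt a' with hc₂def
  have hc₂pos : 0 < c₂ := Real.sqrt_pos.mpr ha'pos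
  have h22 : c₂ * c₂ = a' := Real.mul_self_sqrt ha'pos.le
  set c₁ := Real.sqrt ((a * a' - (p0^2+p1^2+p2^2+p3^2)) / a') with hc₁def
  have hc₁pos : 0 < c₁ := Real.sqrt_pos.mpr (div_pos hkeypos ha'pos)
  have h11 : c₁ * c₁ + c₂⁻¹ * c₂⁻¹ * (p0^2+p1^2+p2^2+p3^2) = a := by
    have h1 : c₁ * c₁ = (a * a' - (p0^2+p1^2+p2^2+p3^2)) / a' :=
      Real.mul_self_sqrt (div_pos hkeypos ha'pos).le
    have h2 : c₂⁻¹ * c₂⁻¹ = a'⁻¹ := by rw [← mul_inv, h22]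
    rw [h1, h2]
    field_simp
    ring
  -- the Cholesky factor
  set b := bmat c₁ c₂ p0 p1 p2 p3 with hbdef
  set b' := bmat' c₁ c₂ p0 p1 p2 p3 with hb'def
  have hbb' : b * b' = 1 := bmat_mul_inv hc₁pos.ne' hc₂pos.ne' p0 p1 p2 p3
  have hb'b : b' * b = 1 := bmat_inv_mul hc₁pos.ne' hc₂pos.ne' p0 p1 p2 p3
  have hbtb : bᵀ * b = A := by
    rw [hbdef, bmat_t_mul hc₂pos.ne' h22 h11, ← hAL]
  have hbu' : IsUnit b' := ⟨⟨b', b, hb'b, hbb'⟩, rfl⟩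
  have hbQ1 : b * Q1 = Q1 * b := bmat_commQ1 c₁ c₂ p0 p1 p2 p3
  have hbQ2 : b * Q2 = Q2 * b := bmat_commQ2 c₁ c₂ p0 p1 p2 p3
  have hbQ3 : b * Q3 = Q3 * b := bmat_commQ3 c₁ c₂ p0 p1 p2 p3
  have hbinvQ : ∀ Q : Matrix (Fin 8) (Fin 8) ℝ, b * Q = Q * b → b' * Q = Q * b' := by
    intro Q hQ
    calc b' * Q = (b' * Q) * (b * b') := by rw [hbb', mul_one]
      _ = ((b' * Q) * b) * b' := by rw [mul_assoc (b' * Q) b b']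
      _ = (b' * (Q * b)) * b' := by rw [mul_assoc b' Q b]
      _ = (b' * (b * Q)) * b' := by rw [hQ]
      _ = ((b' * b) * Q) * b' := by rw [mul_assoc b' b Q]
      _ = Q * b' := by rw [hb'b, one_mul]
  -- the orthogonal factor
  set k := g * b' with hkdef
  have hku : IsUnit k := hgu.mul hbu'
  have hkdet : IsUnit k.det := (Matrix.isUnit_iff_isUnit_det k).mp hku
  have hkinv1 : k * k⁻¹ = 1 := Matrix.mul_nonsing_inv k hkdet
  have hkinv2 : k⁻¹ * k = 1 := Matrix.nonsing_inv_mul k hkdet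
  have hkb : k * b = g := by rw [hkdef, mul_assoc, hb'b, mul_one]
  have hkT : kᵀ * k = 1 := by
    calc kᵀ * k = (b'ᵀ * gᵀ) * (g * b') := by rw [hkdef, Matrix.transpose_mul]
      _ = b'ᵀ * (gᵀ * (g * b')) := mul_assoc _ _ _
      _ = b'ᵀ * ((gᵀ * g) * b') := by rw [mul_assoc gᵀ g b']
      _ = b'ᵀ * ((bᵀ * b) * b') := by rw [← hAdef, ← hbtb]
      _ = b'ᵀ * (bᵀ * (b * b')) := by rw [mul_assoc bᵀ b b']
      _ = b'ᵀ * bᵀ := by rw [hbb', mul_one]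
      _ = (b * b')ᵀ := (Matrix.transpose_mul b b').symm
      _ = 1 := by rw [hbb', Matrix.transpose_one]
  have hkQ1 : k * Q1 = Q1 * k := by
    rw [hkdef, mul_assoc, hbinvQ Q1 hbQ1, ← mul_assoc, hgQ1, mul_assoc]
  have hkQ2 : k * Q2 = Q2 * k := by
    rw [hkdef, mul_assoc, hbinvQ Q2 hbQ2, ← mul_assoc, hgQ2, mul_assoc]
  have hkQ3 : k * Q3 = Q3 * k := by
    rw [hkdef, mul_assoc, hbinvQ Q3 hbQ3, ← mul_assoc, hgQ3, mul_assoc]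
  have hginv : g⁻¹ = b' * k⁻¹ := Matrix.inv_eq_right_inv (by rw [← mul_assoc, ← hkdef, hkinv1])
  -- the scaling factor
  set t := c₂ * (c₁⁻¹ * c₁⁻¹) with htdef
  have htne : t ≠ 0 :=
    (mul_pos hc₂pos (mul_pos (inv_pos.mpr hc₁pos) (inv_pos.mpr hc₁pos))).ne'
  -- the key bracket computation
  have hup : ∀ (X : Vec 8) (i : Fin 8), (i : ℕ) < 4 → (b' *ᵥ X) i = c₁⁻¹ * X i := by
    intro X i hi
    rw [hb'def]
    exact bmat'_upper c₁ c₂ p0 p1 p2 p3 X i hi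
  have hlow : ∀ v : Vec 8, inN2 v → b *ᵥ v = c₂ • v := by
    intro v hv
    rw [hbdef]
    exact bmat_lower c₁ c₂ p0 p1 p2 p3 v hv
  have key : ∀ u v : Vec 8, b *ᵥ (μ (b' *ᵥ u) (b' *ᵥ v)) = t • μ u v := by
    intro u v
    have hZu : inN2 (b' *ᵥ u - c₁⁻¹ • u) := by
      intro i hi
      simp only [Pi.sub_apply, Pi.smul_apply, smul_eq_mul, hup u i hi, sub_self]
    have hZv : inN2 (b' *ᵥ v - c₁⁻¹ • v) := by
      intro i hi
      simp only [Pi.sub_apply, Pi.smul_apply, smul_eq_mul, hup v i hi, sub_self]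
    have hu : b' *ᵥ u = c₁⁻¹ • u + (b' *ᵥ u - c₁⁻¹ • u) := by abel
    have hv' : b' *ᵥ v = c₁⁻¹ • v + (b' *ᵥ v - c₁⁻¹ • v) := by abel
    have e1 : μ (b' *ᵥ u) (b' *ᵥ v) = c₁⁻¹ • μ u (b' *ᵥ v) := by
      rw [hu]
      have h1 := (hskew.1 (b' *ᵥ v)).map_add (c₁⁻¹ • u) (b' *ᵥ u - c₁⁻¹ • u)
      have h2 := (hskew.1 (b' *ᵥ v)).map_smul c₁⁻¹ u
      rw [h1, h2, hvan _ _ hZu, add_zero]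
    have e2 : μ u (b' *ᵥ v) = c₁⁻¹ • μ u v := by
      rw [hv']
      have h1 := (hskew.2.1 u).map_add (c₁⁻¹ • v) (b' *ᵥ v - c₁⁻¹ • v)
      have h2 := (hskew.2.1 u).map_smul c₁⁻¹ v
      rw [h1, h2]
      have h3 : μ u (b' *ᵥ v - c₁⁻¹ • v) = 0 := by
        rw [hskew.2.2, hvan _ _ hZv, neg_zero]
      rw [h3, add_zero]
    rw [e1, e2, Matrix.mulVec_smul, Matrix.mulVec_smul, hlow _ (hval u v),
      smul_smul, smul_smul, htdef]
    congr 1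
    ring
  -- conclusion
  refine ⟨k, t, htne, ⟨⟨hku, hkQ1, hkQ2, hkQ3⟩, hkT⟩, ?_⟩
  funext X Y
  calc mact g μ X Y = g *ᵥ μ (g⁻¹ *ᵥ X) (g⁻¹ *ᵥ Y) := rfl
    _ = (k * b) *ᵥ μ ((b' * k⁻¹) *ᵥ X) ((b' * k⁻¹) *ᵥ Y) := by rw [hginv, ← hkb]
    _ = k *ᵥ (b *ᵥ μ (b' *ᵥ (k⁻¹ *ᵥ X)) (b' *ᵥ (k⁻¹ *ᵥ Y))) := by
        simp only [Matrix.mulVec_mulVec]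
    _ = k *ᵥ (t • μ (k⁻¹ *ᵥ X) (k⁻¹ *ᵥ Y)) := by rw [key]
    _ = t • (k *ᵥ μ (k⁻¹ *ᵥ X) (k⁻¹ *ᵥ Y)) := Matrix.mulVec_smul k t _
    _ = (t • mact k μ) X Y := rfl
end
end

section
/- The orbit space N_s/Sp(n,ℝ) — the quotient of N_s (with the subspace topology from V) by the orbit equivalence relation of the Sp(n,ℝ)-action, equipped with the quotient topology — is a contractible topological space. (The moduli space of all 2n-dimensional symplectic nilpotent Lie groups up to isomorphism is contractible.) -/
open scoped BigOperators
open Matrix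

noncomputable section

/- The scalings `μ ↦ t • μ` preserve `N_s`, commute with the `Sp(n,ℝ)`-action and shrink every
bracket to the abelian one `μ = 0` as `t → 0`; so the straight-line contraction of the cone `N_s`
onto `0` descends to the orbit space. -/

open unitInterval in
theorem ContinuousMap.Homotopy.contractibleSpace_quot {X : Type*} [TopologicalSpace X]
    {r : X → X → Prop} {x₀ : X} (H : (ContinuousMap.id X).Homotopy (ContinuousMap.const X x₀))
    (hH : ∀ t x y, r x y → r (H (t, x)) (H (t, y))) : ContractibleSpace (Quot r) := by
  let G : I × Quot r → Quot r := fun p =>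
    Quot.lift (fun x => Quot.mk r (H (p.1, x))) (fun x y h => Quot.sound (hH p.1 x y h)) p.2
  have hG : Continuous G :=
    isQuotientMap_quot_mk.continuous_lift_prod_right (continuous_quot_mk.comp H.continuous)
  rw [contractible_iff_id_nullhomotopic]
  refine ⟨Quot.mk r x₀, ⟨⟨⟨G, hG⟩, ?_, ?_⟩⟩⟩
  · rintro ⟨x⟩
    exact congrArg (Quot.mk r) (H.apply_zero x)
  · rintro ⟨x⟩
    exact congrArg (Quot.mk r) (H.apply_one x)

theorem StarConvex.contractibleSpace_quot {E : Type*} [AddCommGroup E] [Module ℝ E]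
    [TopologicalSpace E] [ContinuousSMul ℝ E] {s : Set E} (hs : StarConvex ℝ 0 s) (h0 : 0 ∈ s)
    {R : E → E → Prop} (hR : ∀ (c : ℝ) x y, R x y → R (c • x) (c • y)) :
    ContractibleSpace (Quot fun x y : s => R x y) := by
  let H : (ContinuousMap.id s).Homotopy (ContinuousMap.const s ⟨0, h0⟩) :=
    { toFun := fun p => ⟨(1 - (p.1 : ℝ)) • (p.2 : E), by
        simpa using hs p.2.2 p.1.2.1 (sub_nonneg.2 p.1.2.2) (add_sub_cancel _ _)⟩
      continuous_toFun := by fun_prop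
      map_zero_left := fun x => by simp
      map_one_left := fun x => by simp }
  exact H.contractibleSpace_quot fun t x y => hR _ x y

section Scaling

variable {m : ℕ}

theorem IsSkewBil.smul {μ : Bil m} (h : IsSkewBil μ) (c : ℝ) : IsSkewBil (c • μ) :=
  ⟨fun Y => (c • (h.1 Y).mk' _).isLinear, fun X => (c • (h.2.1 X).mk' _).isLinear,
    fun X Y => by simp only [Pi.smul_apply, h.2.2 X Y, smul_neg]⟩

theorem IsJacobi.smul {μ : Bil m} (hs : IsSkewBil μ) (hj : IsJacobi μ) (c : ℝ) :
    IsJacobi (c • μ) := by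
  intro X Y Z
  simp only [Pi.smul_apply, (hs.1 _).map_smul, ← smul_add, hj X Y Z, smul_zero]

theorem adPow_smul {μ : Bil m} (h : ∀ X, IsLinearMap ℝ (μ X)) (c : ℝ) (X : ℕ → Vec m) (k : ℕ)
    (Y : Vec m) : adPow (c • μ) X k Y = c ^ k • adPow μ X k Y := by
  induction k with
  | zero => simp [adPow]
  | succ k ih => rw [adPow, ih, adPow, Pi.smul_apply, Pi.smul_apply, (h _).map_smul, smul_smul,
      pow_succ']

theorem IsNilpotentBil.smul {μ : Bil m} (h : ∀ X, IsLinearMap ℝ (μ X)) (hn : IsNilpotentBil μ)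
    (c : ℝ) : IsNilpotentBil (c • μ) := by
  obtain ⟨k, hk⟩ := hn
  exact ⟨k, fun X Y => by rw [adPow_smul h, hk, smul_zero]⟩

theorem NilBracket.smul {μ : Bil m} (h : NilBracket μ) (c : ℝ) : NilBracket (c • μ) :=
  ⟨h.1.smul c, h.2.1.smul h.1 c, h.2.2.smul h.1.2.1 c⟩

theorem nilBracket_zero : NilBracket (0 : Bil m) :=
  ⟨⟨fun _ => (0 : Vec m →ₗ[ℝ] Vec m).isLinear, fun _ => (0 : Vec m →ₗ[ℝ] Vec m).isLinear, by simp⟩,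
    by simp [IsJacobi], 1, fun _ _ => rfl⟩

theorem IsClosedForm.sympForm_smul {J : Matrix (Fin m) (Fin m) ℝ} {μ : Bil m}
    (h : IsClosedForm (sympForm J) μ) (c : ℝ) : IsClosedForm (sympForm J) (c • μ) := by
  intro X Y Z
  have hXYZ := h X Y Z
  simp only [sympForm, Pi.smul_apply, smul_dotProduct, smul_eq_mul, ← mul_add] at hXYZ ⊢
  rw [hXYZ, mul_zero]

theorem isClosedForm_sympForm_zero (J : Matrix (Fin m) (Fin m) ℝ) :
    IsClosedForm (sympForm J) (0 : Bil m) := by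
  simp [IsClosedForm, sympForm]

theorem mact_smul (g : Matrix (Fin m) (Fin m) ℝ) (c : ℝ) (μ : Bil m) :
    mact g (c • μ) = c • mact g μ := by
  funext X Y
  simp [mact, Matrix.mulVec_smul]

end Scaling

theorem moduli_contractible_general (n : ℕ)
    (J : Matrix (Fin (2 * n)) (Fin (2 * n)) ℝ) :
    ContractibleSpace (Quot (fun μ ν :
        {μ : Bil (2 * n) // NilBracket μ ∧ IsClosedForm (sympForm J) μ} =>
      ∃ g : Matrix (Fin (2 * n)) (Fin (2 * n)) ℝ, IsSymplMat J g ∧ mact g μ.1 = ν.1)) := by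
  have hcone : StarConvex ℝ 0 {μ : Bil (2 * n) | NilBracket μ ∧ IsClosedForm (sympForm J) μ} :=
    fun μ hμ a b _ _ _ => by simpa using ⟨hμ.1.smul b, hμ.2.sympForm_smul b⟩
  refine hcone.contractibleSpace_quot (R := fun μ ν => ∃ g, IsSymplMat J g ∧ mact g μ = ν)
    ⟨nilBracket_zero, isClosedForm_sympForm_zero J⟩ ?_
  rintro c μ _ ⟨g, hg, rfl⟩
  exact ⟨g, hg, mact_smul g c μ⟩

/-- the moduli space `N_s/Sp(n,ℝ)` of 2n-dimensional symplectic nilpotent Lie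
groups up to isomorphism, with the quotient topology, is contractible. -/
theorem moduli_contractible (n : ℕ) (hn : 1 ≤ n)
    (J : Matrix (Fin (2 * n)) (Fin (2 * n)) ℝ) (hJskew : Jᵀ = -J) (hJsq : J * J = -1) :
    ContractibleSpace (Quot (fun μ ν :
        {μ : Bil (2 * n) // NilBracket μ ∧ IsClosedForm (sympForm J) μ} =>
      ∃ g : Matrix (Fin (2 * n)) (Fin (2 * n)) ℝ, IsSymplMat J g ∧ mact g μ.1 = ν.1)) :=
  moduli_contractible_general n J
end
end
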